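/- arXiv:0909.3942 — 8 statements merged into one kernel-verified Lean document; each statement's English description precedes it below -/
import Mathlib

section
/- Let K be a field and r ≥ 2 an integer prime to char(K). If PGL₂(K) contains an element of order r, then K contains ζ + ζ⁻¹ for some primitive r-th root of unity ζ in a separable closure of K. -/
/-!
Lift an element of order `r` to `A ∈ GL₂(K)` and let `α, β` be the roots of its characteristic
polynomial `X² - tX + d` in an algebraic closure. Reducing `X ^ n` modulo this polynomial gives
`A ^ n = aₙ A + bₙ`, `α ^ n = aₙ α + bₙ` and `β ^ n = aₙ β + bₙ` with the same `aₙ, bₙ ∈ K`.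
As `A` is not scalar, `A ^ n` is scalar iff `aₙ = 0`, which for `α ≠ β` means `α ^ n = β ^ n`.
Hence `ζ = α / β` is a primitive `r`-th root of unity, and `ζ + ζ⁻¹ = (t² - 2d) / d ∈ K`.
A double root is impossible: then `aₙ α = n αⁿ`, while `aᵣ = 0` and `r ≠ 0` in `K`.
Finally `ζ` is separable over `K`, being a root of `X ^ r - 1`.
-/

/-- `PGL₂(K)`: the projective general linear group, `GL₂(K)` modulo its center
(the scalar matrices). -/
abbrev PGL2 (K : Type*) [Field K] :=
  GL (Fin 2) K ⧸ Subgroup.center (GL (Fin 2) K)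

open Polynomial

/-- `(a, b)` with `X ^ n ≡ a * X + b` modulo `X ^ 2 - t * X + d`. -/
def quadraticPowCoeffs {R : Type*} [CommRing R] (t d : R) : ℕ → R × R
  | 0 => (0, 1)
  | n + 1 =>
    ((quadraticPowCoeffs t d n).1 * t + (quadraticPowCoeffs t d n).2,
      -((quadraticPowCoeffs t d n).1 * d))

section QuadraticPowCoeffs

variable {R : Type*} [CommRing R]

theorem map_quadraticPowCoeffs {S : Type*} [CommRing S] (f : R →+* S) (t d : R) (n : ℕ) :
    quadraticPowCoeffs (f t) (f d) n = Prod.map f f (quadraticPowCoeffs t d n) := by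
  induction n with
  | zero => simp [quadraticPowCoeffs]
  | succ n ih => simp [quadraticPowCoeffs, ih]

theorem pow_eq_quadraticPowCoeffs {A : Type*} [Ring A] [Algebra R A] {t d : R} {x : A}
    (hx : x ^ 2 = t • x - algebraMap R A d) (n : ℕ) :
    x ^ n = (quadraticPowCoeffs t d n).1 • x + algebraMap R A (quadraticPowCoeffs t d n).2 := by
  induction n with
  | zero => simp [quadraticPowCoeffs]
  | succ n ih =>
    simp only [pow_succ, ih, add_mul, smul_mul_assoc, ← sq, hx, quadraticPowCoeffs,
      Algebra.algebraMap_eq_smul_one, one_mul]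
    module

theorem quadraticPowCoeffs_double_root (c : R) (n : ℕ) :
    (quadraticPowCoeffs (c + c) (c * c) n).1 * c = n * c ^ n ∧
      (quadraticPowCoeffs (c + c) (c * c) n).2 = (1 - n) * c ^ n := by
  induction n with
  | zero => simp [quadraticPowCoeffs]
  | succ n ih =>
    simp only [quadraticPowCoeffs]
    push_cast
    constructor
    · linear_combination c * ih.2 + (c + c) * ih.1
    · linear_combination -c * ih.1

theorem pow_eq_pow_iff_quadraticPowCoeffs_eq_zero [NoZeroDivisors R] {x y : R} (hxy : x ≠ y)
    (n : ℕ) : x ^ n = y ^ n ↔ (quadraticPowCoeffs (x + y) (x * y) n).1 = 0 := by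
  have hx : x ^ 2 = (x + y) • x - algebraMap R R (x * y) := by simp; ring
  have hy : y ^ 2 = (x + y) • y - algebraMap R R (x * y) := by simp; ring
  rw [pow_eq_quadraticPowCoeffs hx, pow_eq_quadraticPowCoeffs hy, ← sub_eq_zero]
  simp [← mul_sub, sub_eq_zero, hxy]

end QuadraticPowCoeffs

theorem pow_mem_range_algebraMap_iff {K A : Type*} [Field K] [Ring A] [Algebra K A] {t d : K}
    {x : A} (hx : x ^ 2 = t • x - algebraMap K A d) (hx' : x ∉ Set.range (algebraMap K A))
    (n : ℕ) :
    x ^ n ∈ Set.range (algebraMap K A) ↔ (quadraticPowCoeffs t d n).1 = 0 := by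
  rw [pow_eq_quadraticPowCoeffs hx n]
  set a := (quadraticPowCoeffs t d n).1
  set b := (quadraticPowCoeffs t d n).2
  refine ⟨fun ⟨c, hc⟩ ↦ by_contra fun ha ↦ hx' ⟨a⁻¹ * (c - b), ?_⟩, fun ha ↦ by simp [ha]⟩
  rw [map_mul, map_sub, hc, ← Algebra.smul_def, add_sub_cancel_right, inv_smul_smul₀ ha]

theorem Matrix.sq_eq_trace_smul_sub_algebraMap_det {R : Type*} [CommRing R]
    (M : Matrix (Fin 2) (Fin 2) R) : M ^ 2 = M.trace • M - algebraMap R _ M.det := by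
  ext i j
  fin_cases i <;> fin_cases j <;>
    simp [sq, Matrix.mul_apply, Matrix.trace_fin_two, Matrix.det_fin_two,
      Matrix.algebraMap_eq_diagonal] <;> ring

theorem orderOf_mk_dvd_iff_pow_mem_range_scalar {n R : Type*} [Fintype n] [DecidableEq n]
    [CommRing R] (A : GL n R) (k : ℕ) :
    orderOf (A : GL n R ⧸ Subgroup.center (GL n R)) ∣ k ↔
      (A : Matrix n n R) ^ k ∈ Set.range (Matrix.scalar n) := by
  rw [orderOf_dvd_iff_pow_eq_one, ← QuotientGroup.mk_pow, QuotientGroup.eq_one_iff,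
    Matrix.GeneralLinearGroup.mem_center_iff_val_mem_range_scalar, Units.val_pow_eq_pow_val]

theorem IsAlgClosed.exists_add_eq_and_mul_eq {k : Type*} [Field k] [IsAlgClosed k] (s p : k) :
    ∃ x y : k, x + y = s ∧ x * y = p := by
  obtain ⟨x, hx⟩ := IsAlgClosed.exists_root (X ^ 2 - C s * X + C p)
    ((show (X ^ 2 - C s * X + C p : k[X]).degree = 2 by compute_degree!).trans_ne (by decide))
  refine ⟨x, s - x, add_sub_cancel x s, ?_⟩
  simp only [IsRoot, eval_add, eval_sub, eval_mul, eval_pow, eval_C, eval_X] at hx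
  linear_combination -hx

theorem isSeparable_of_pow_eq_one {K L : Type*} [Field K] [Ring L] [Algebra K L] {x : L} {n : ℕ}
    (hx : x ^ n = 1) (hn : (n : K) ≠ 0) : IsSeparable K x :=
  (X_pow_sub_one_separable_iff.mpr hn).of_dvd (minpoly.dvd K x (by simp [hx]))

/-- If `r ≥ 2` is prime to `char K` and `PGL₂(K)` contains an element of order `r`,
then `K` contains `ζ + ζ⁻¹` for some primitive `r`-th root of unity `ζ` in a separable
closure of `K`. -/
theorem order_r_element_implies_trace_of_primitive_root
    (K : Type*) [Field K] (r : ℕ) (hr : 2 ≤ r) (hchar : (r : K) ≠ 0)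
    (h : ∃ x : PGL2 K, orderOf x = r) :
    ∃ ζ : separableClosure K (AlgebraicClosure K),
      IsPrimitiveRoot ζ r ∧
      ∃ l : K, algebraMap K (separableClosure K (AlgebraicClosure K)) l = ζ + ζ⁻¹ := by
  obtain ⟨x, hx⟩ := h
  obtain ⟨A, rfl⟩ := QuotientGroup.mk_surjective x
  set M := (A : Matrix (Fin 2) (Fin 2) K)
  set f := algebraMap K (AlgebraicClosure K)
  have hdvd (n : ℕ) : r ∣ n ↔ M ^ n ∈ Set.range (algebraMap K _) :=
    hx ▸ orderOf_mk_dvd_iff_pow_mem_range_scalar A n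
  have hM : M ∉ Set.range (algebraMap K _) := fun hM ↦ by
    have := Nat.le_of_dvd one_pos ((hdvd 1).mpr (by simpa using hM))
    omega
  obtain ⟨α, β, hsum, hprod⟩ := IsAlgClosed.exists_add_eq_and_mul_eq (f M.trace) (f M.det)
  have hcoeff (n : ℕ) : r ∣ n ↔ (quadraticPowCoeffs (α + β) (α * β) n).1 = 0 := by
    rw [hdvd, pow_mem_range_algebraMap_iff M.sq_eq_trace_smul_sub_algebraMap_det hM, hsum, hprod,
      map_quadraticPowCoeffs]
    simp
  have hαβ : α * β ≠ 0 := hprod ▸ (map_ne_zero f).mpr A.det_ne_zero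
  have hne : α ≠ β := by
    rintro rfl
    have := (quadraticPowCoeffs_double_root α r).1
    rw [(hcoeff r).mp dvd_rfl, zero_mul, eq_comm] at this
    exact (map_ne_zero f).mpr hchar (by simpa [left_ne_zero_of_mul hαβ] using this)
  have hζ : IsPrimitiveRoot (α / β) r := by
    have hiff (n : ℕ) : (α / β) ^ n = 1 ↔ r ∣ n := by
      rw [div_pow, div_eq_one_iff_eq (pow_ne_zero _ (right_ne_zero_of_mul hαβ)),
        pow_eq_pow_iff_quadraticPowCoeffs_eq_zero hne, hcoeff]
    exact ⟨(hiff r).mpr dvd_rfl, fun n ↦ (hiff n).mp⟩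
  refine ⟨⟨α / β, isSeparable_of_pow_eq_one hζ.pow_eq_one hchar⟩,
    (IsPrimitiveRoot.map_iff_of_injective (f := (separableClosure K _).val)
      Subtype.val_injective).mp hζ,
    (M.trace ^ 2 - 2 * M.det) / M.det, Subtype.ext ?_⟩
  change f ((M.trace ^ 2 - 2 * M.det) / M.det) = α / β + (α / β)⁻¹
  rw [map_div₀, map_sub, map_mul, map_pow, map_ofNat, ← hsum, ← hprod]
  field_simp [left_ne_zero_of_mul hαβ, right_ne_zero_of_mul hαβ]
  ring
end

section
/- Let K be a field with char(K) ≠ 2,3, and suppose −1 is a sum of two squares in K. Then PGL₂(K) contains a subgroup isomorphic to the symmetric group S₄. -/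
open Equiv Matrix Quaternion

instance QuaternionAlgebra.instDecidableEq {R : Type*} [DecidableEq R] {c₁ c₂ c₃ : R} :
    DecidableEq ℍ[R,c₁,c₂,c₃] := fun p q =>
  decidable_of_iff (p.re = q.re ∧ p.imI = q.imI ∧ p.imJ = q.imJ ∧ p.imK = q.imK)
    QuaternionAlgebra.ext_iff.symm

instance Quaternion.instDecidableEq {R : Type*} [Zero R] [One R] [Neg R] [DecidableEq R] :
    DecidableEq ℍ[R] :=
  inferInstanceAs (DecidableEq ℍ[R,-1,0,-1])

namespace QuotientGroup

variable {G H : Type*} [Monoid G] [Group H] (N : Subgroup H) [N.Normal]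

def homOfMulDivMem (f : G → H) (hf : ∀ g g', f g * f g' / f (g * g') ∈ N) : G →* H ⧸ N where
  toFun g := f g
  map_one' := (eq_one_iff _).2 (by simpa using hf 1 1)
  map_mul' g g' := (eq_iff_div_mem.2 (hf g g')).symm

theorem homOfMulDivMem_apply (f : G → H) (hf : ∀ g g', f g * f g' / f (g * g') ∈ N) (g : G) :
    homOfMulDivMem N f hf g = f g := rfl

end QuotientGroup

namespace Quaternion

variable {S R : Type*} [CommRing S] [CommRing R] [Algebra S R] {a b : R}

def splittingBasis (hab : a ^ 2 + b ^ 2 = -1) :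
    QuaternionAlgebra.Basis (Matrix (Fin 2) (Fin 2) R) (-1 : S) 0 (-1) where
  i := !![0, 1; -1, 0]
  j := !![a, b; b, -a]
  k := !![b, -a; -a, -b]
  i_mul_i := by ext i j; fin_cases i <;> fin_cases j <;> simp
  j_mul_j := by ext i j; fin_cases i <;> fin_cases j <;> simp [mul_comm] <;> linear_combination hab
  i_mul_j := by ext i j; fin_cases i <;> fin_cases j <;> simp
  j_mul_i := by ext i j; fin_cases i <;> fin_cases j <;> simp

def toMatrix (hab : a ^ 2 + b ^ 2 = -1) : ℍ[S] →ₐ[S] Matrix (Fin 2) (Fin 2) R :=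
  (splittingBasis hab).liftHom

variable (hab : a ^ 2 + b ^ 2 = -1)

theorem toMatrix_apply (q : ℍ[S]) :
    toMatrix hab q =
      let w := algebraMap S R q.re; let x := algebraMap S R q.imI
      let y := algebraMap S R q.imJ; let z := algebraMap S R q.imK
      !![w + y * a + z * b, x + y * b - z * a; -x + y * b - z * a, w - y * a - z * b] := by
  show (splittingBasis hab).lift q = _
  ext i j; fin_cases i <;> fin_cases j <;>
    simp [QuaternionAlgebra.Basis.lift, splittingBasis, algebraMap_matrix_apply,
      Algebra.smul_def (A := R)] <;> ring

theorem det_toMatrix (q : ℍ[S]) : (toMatrix hab q).det = algebraMap S R (normSq q) := by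
  rw [toMatrix_apply, det_fin_two_of, normSq_def']
  simp only [map_add, map_pow]
  linear_combination (-(algebraMap S R q.imJ) ^ 2 - (algebraMap S R q.imK) ^ 2) * hab

theorem toMatrix_star (q : ℍ[S]) : toMatrix hab (star q) = adjugate (toMatrix hab q) := by
  rw [toMatrix_apply, toMatrix_apply, adjugate_fin_two_of]
  ext i j; fin_cases i <;> fin_cases j <;> simp <;> ring

theorem toMatrix_mul_mul_inv_mem_range_scalar {p q r : ℍ[S]} (h : (p * q * star r).im = 0) :
    toMatrix hab p * toMatrix hab q * (toMatrix hab r)⁻¹ ∈ Set.range (scalar (Fin 2)) := by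
  obtain ⟨s, hs⟩ : ∃ s, p * q * star r = algebraMap S ℍ[S] s :=
    ⟨_, by rw [algebraMap_def, ← Quaternion.re_add_im (p * q * star r), h, add_zero]⟩
  refine ⟨Ring.inverse (algebraMap S R (normSq r)) * algebraMap S R s, ?_⟩
  rw [Matrix.inv_def, det_toMatrix, ← toMatrix_star, mul_smul_comm, ← map_mul, ← map_mul, hs,
    AlgHom.commutes]
  ext i j
  simp [algebraMap_matrix_apply, diagonal_apply]

theorem map_im_eq_zero_of_toMatrix_mem_range_scalar [IsDomain R] (h2 : (2 : R) ≠ 0) {q : ℍ[S]}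
    (h : toMatrix hab q ∈ Set.range (scalar (Fin 2))) :
    algebraMap S R q.imI = 0 ∧ algebraMap S R q.imJ = 0 ∧ algebraMap S R q.imK = 0 := by
  obtain ⟨c, hc⟩ := h
  rw [toMatrix_apply] at hc
  set y := algebraMap S R q.imJ
  set z := algebraMap S R q.imK
  have h00 := congrFun₂ hc 0 0
  have h01 := congrFun₂ hc 0 1
  have h10 := congrFun₂ hc 1 0
  have h11 := congrFun₂ hc 1 1
  simp at h00 h01 h10 h11
  have hv : y * a + z * b = 0 := by
    refine (mul_eq_zero.1 ?_).resolve_left h2; linear_combination h11 - h00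
  have hu : y * b - z * a = 0 := by
    refine (mul_eq_zero.1 ?_).resolve_left h2; linear_combination -h01 - h10
  refine ⟨(mul_eq_zero.1 ?_).resolve_left h2, ?_, ?_⟩
  · linear_combination -h01 + h10
  · linear_combination -a * hv - b * hu + y * hab
  · linear_combination -b * hv + a * hu + z * hab

end Quaternion

namespace CubeRotation

/-- An integral quaternion `q` whose rotation `v ↦ q v q⋆` of pure quaternions maps the diagonal
`dᵢ` of the cube to `±d_{σ i}`, where `d₀ = i + j + k`, `d₁ = i - j - k`, `d₂ = -i + j - k`,
`d₃ = -i - j + k`. The table is indexed by `(σ 0, σ 1, σ 2, σ 3)`; the last case is unreachable. -/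
def cubeQuat (σ : Perm (Fin 4)) : ℍ[ℤ] :=
  match (σ 0 : ℕ), (σ 1 : ℕ), (σ 2 : ℕ), (σ 3 : ℕ) with
  | 0, 1, 2, 3 => ⟨1, 0, 0, 0⟩
  | 0, 1, 3, 2 => ⟨0, 0, 1, -1⟩
  | 0, 2, 1, 3 => ⟨0, 1, -1, 0⟩
  | 0, 2, 3, 1 => ⟨1, 1, 1, 1⟩
  | 0, 3, 1, 2 => ⟨1, -1, -1, -1⟩
  | 0, 3, 2, 1 => ⟨0, 1, 0, -1⟩
  | 1, 0, 2, 3 => ⟨0, 0, 1, 1⟩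
  | 1, 0, 3, 2 => ⟨0, 1, 0, 0⟩
  | 1, 2, 0, 3 => ⟨1, 1, 1, -1⟩
  | 1, 2, 3, 0 => ⟨1, 0, -1, 0⟩
  | 1, 3, 0, 2 => ⟨1, 0, 0, 1⟩
  | 1, 3, 2, 0 => ⟨1, -1, 1, -1⟩
  | 2, 0, 1, 3 => ⟨1, -1, -1, 1⟩
  | 2, 0, 3, 1 => ⟨1, 0, 0, -1⟩
  | 2, 1, 0, 3 => ⟨0, 1, 0, 1⟩
  | 2, 1, 3, 0 => ⟨1, -1, 1, 1⟩
  | 2, 3, 0, 1 => ⟨0, 0, 1, 0⟩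
  | 2, 3, 1, 0 => ⟨1, 1, 0, 0⟩
  | 3, 0, 1, 2 => ⟨1, 0, 1, 0⟩
  | 3, 0, 2, 1 => ⟨1, 1, -1, 1⟩
  | 3, 1, 0, 2 => ⟨1, 1, -1, -1⟩
  | 3, 1, 2, 0 => ⟨0, 1, 1, 0⟩
  | 3, 2, 0, 1 => ⟨1, -1, 0, 0⟩
  | 3, 2, 1, 0 => ⟨0, 0, 0, 1⟩
  | _, _, _, _ => 1

theorem normSq_cubeQuat_dvd_four : ∀ σ, normSq (cubeQuat σ) ∣ 4 := by decide

theorem im_cubeQuat_mul_cubeQuat_mul_star :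
    ∀ σ τ, (cubeQuat σ * cubeQuat τ * star (cubeQuat (σ * τ))).im = 0 := by decide

theorem isUnit_im_cubeQuat : ∀ σ, σ ≠ 1 →
    IsUnit (cubeQuat σ).imI ∨ IsUnit (cubeQuat σ).imJ ∨ IsUnit (cubeQuat σ).imK := by
  simp only [Int.isUnit_iff]; decide

variable {K : Type*} [Field K] {a b : K} (hab : a ^ 2 + b ^ 2 = -1) (h2 : (2 : K) ≠ 0)

include h2 in
theorem normSq_cubeQuat_ne_zero (σ : Perm (Fin 4)) : ((normSq (cubeQuat σ) : ℤ) : K) ≠ 0 := by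
  have h4 : (4 : K) ≠ 0 := by simpa [show (4 : K) = 2 * 2 by norm_num] using h2
  exact ne_zero_of_dvd_ne_zero (by exact_mod_cast h4)
    (Int.cast_dvd_cast _ _ (normSq_cubeQuat_dvd_four σ))

include h2 in
def cubeGL (σ : Perm (Fin 4)) : GL (Fin 2) K :=
  GeneralLinearGroup.mkOfDetNeZero (toMatrix hab (cubeQuat σ))
    (by simpa [det_toMatrix] using normSq_cubeQuat_ne_zero h2 σ)

theorem val_cubeGL (σ : Perm (Fin 4)) :
    (cubeGL hab h2 σ : Matrix (Fin 2) (Fin 2) K) = toMatrix hab (cubeQuat σ) := rfl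

def cubeRep : Perm (Fin 4) →* PGL2 K :=
  QuotientGroup.homOfMulDivMem _ (cubeGL hab h2) fun σ τ ↦ by
    rw [GeneralLinearGroup.mem_center_iff_val_mem_range_scalar, div_eq_mul_inv, Units.val_mul,
      Units.val_mul, coe_units_inv, val_cubeGL, val_cubeGL, val_cubeGL]
    exact toMatrix_mul_mul_inv_mem_range_scalar hab (im_cubeQuat_mul_cubeQuat_mul_star σ τ)

theorem cubeRep_injective : Function.Injective (cubeRep hab h2) := by
  refine (injective_iff_map_eq_one _).2 fun σ hσ ↦ ?_
  rw [cubeRep, QuotientGroup.homOfMulDivMem_apply, QuotientGroup.eq_one_iff,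
    GeneralLinearGroup.mem_center_iff_val_mem_range_scalar, val_cubeGL] at hσ
  obtain ⟨hx, hy, hz⟩ := map_im_eq_zero_of_toMatrix_mem_range_scalar hab h2 hσ
  by_contra hne
  obtain hu | hu | hu := isUnit_im_cubeQuat σ hne
  exacts [(hu.map (algebraMap ℤ K)).ne_zero hx, (hu.map (algebraMap ℤ K)).ne_zero hy,
    (hu.map (algebraMap ℤ K)).ne_zero hz]

end CubeRotation

open CubeRotation in
theorem pgl2_contains_S4_general
    (K : Type*) [Field K] (h2 : (2 : K) ≠ 0)
    (hsq : ∃ a b : K, a ^ 2 + b ^ 2 = -1) :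
    ∃ H : Subgroup (PGL2 K), Nonempty (H ≃* Equiv.Perm (Fin 4)) := by
  obtain ⟨a, b, hab⟩ := hsq
  exact ⟨(cubeRep hab h2).range, ⟨(MonoidHom.ofInjective (cubeRep_injective hab h2)).symm⟩⟩

/-- If `char K ≠ 2, 3` and `−1` is a sum of two squares in `K`, then `PGL₂(K)`
contains a subgroup isomorphic to the symmetric group `S₄`. -/
theorem pgl2_contains_S4
    (K : Type*) [Field K] (h2 : (2 : K) ≠ 0) (h3 : (3 : K) ≠ 0)
    (hsq : ∃ a b : K, a ^ 2 + b ^ 2 = -1) :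
    ∃ H : Subgroup (PGL2 K), Nonempty (H ≃* Equiv.Perm (Fin 4)) :=
  pgl2_contains_S4_general K h2 hsq
end

section
/- Let K be a field with char(K) ≠ 2,3. If PGL₂(K) contains a subgroup isomorphic to the alternating group A₄, then −1 is a sum of two squares in K. -/
/-!
A nontrivial involution of `PGL₂(K)` lifts to a non-scalar matrix `X` with `X²` scalar, so by
Cayley–Hamilton `tr X = 0` and `X² = -det X`. The determinant modulo squares is a homomorphism
`δ : PGL₂(K) → Kˣ/Kˣ²`, hence constant on conjugacy classes. In `A₄` the involutions `a`, `b`,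
`ab` are conjugate, so `δ a = δ b = δ a * δ b` and both are trivial: rescaling gives lifts `A`, `B`
with `A² = B² = -1`, and `AB + BA = tr(AB) = 0` because `AB` lifts the involution `ab`.
As `A`, `B`, `AB` pairwise anticommute and square to `-1`, the square of `xA + yB + zAB` is
`-(x² + y² + z²)`; writing the nilpotent matrix `E₀₁` in this form gives a zero of `x² + y² + z²`.
-/

namespace Matrix

variable {R : Type*} [CommRing R]

theorem mul_self_eq_trace_smul_sub_det_smul_one (X : Matrix (Fin 2) (Fin 2) R) :
    X * X = X.trace • X - X.det • 1 := by
  ext i j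
  fin_cases i <;> fin_cases j <;> simp [mul_apply, trace_fin_two, det_fin_two] <;> ring

theorem mul_add_mul_eq_trace_mul_smul_one {X Y : Matrix (Fin 2) (Fin 2) R}
    (hX : X.trace = 0) (hY : Y.trace = 0) : X * Y + Y * X = (X * Y).trace • 1 := by
  rw [trace_fin_two, add_eq_zero_iff_eq_neg'] at hX hY
  ext i j
  fin_cases i <;> fin_cases j <;> simp [mul_apply, trace_fin_two, hX, hY] <;> ring

variable {K : Type*} [Field K]

theorem trace_eq_zero_of_mul_self_mem_range_scalar {X : Matrix (Fin 2) (Fin 2) K}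
    (hXX : X * X ∈ Set.range (scalar (Fin 2))) (hX : X ∉ Set.range (scalar (Fin 2))) :
    X.trace = 0 := by
  obtain ⟨α, hα⟩ := hXX
  by_contra htr
  refine hX ⟨(α + X.det) / X.trace, ?_⟩
  have hCH := X.mul_self_eq_trace_smul_sub_det_smul_one
  rw [scalar_apply, ← smul_one_eq_diagonal] at hα ⊢
  rw [← hα, eq_sub_iff_add_eq, ← add_smul] at hCH
  rw [div_eq_inv_mul, mul_smul, hCH, inv_smul_smul₀ htr]

theorem exists_sq_add_sq_eq_neg_one_of_anticommute {A B : Matrix (Fin 2) (Fin 2) K}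
    (hA : A * A = -1) (hB : B * B = -1) (hAB : A * B = -(B * A)) :
    ∃ a b : K, a ^ 2 + b ^ 2 = -1 := by
  have hA00 : A 0 0 ^ 2 + A 0 1 * A 1 0 = -1 := by
    simpa [mul_apply, sq] using congr_fun₂ hA 0 0
  have hB00 : B 0 0 ^ 2 + B 0 1 * B 1 0 = -1 := by
    simpa [mul_apply, sq] using congr_fun₂ hB 0 0
  have hAB00 : 2 * A 0 0 * B 0 0 + A 0 1 * B 1 0 + A 1 0 * B 0 1 = 0 := by
    have h := congr_fun₂ hAB 0 0
    simp only [mul_apply, Fin.sum_univ_two, neg_apply] at h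
    linear_combination h
  -- Up to the factor `-2`, `x`, `y`, `z` are the coordinates of the nilpotent `E₀₁` in the basis
  -- `A, B, A * B` of the trace-zero matrices.
  set x := A 1 0
  set y := B 1 0
  set z := x * B 0 0 - A 0 0 * y
  have hxyz : x ^ 2 + y ^ 2 + z ^ 2 = 0 := by
    linear_combination x ^ 2 * hB00 + y ^ 2 * hA00 - x * y * hAB00
  by_cases hz : z = 0
  · by_cases hx : x = 0
    · exact ⟨A 0 0, 0, by simpa [hx] using hA00⟩
    · refine ⟨y / x, 0, ?_⟩
      field_simp
      linear_combination hxyz - z * hz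
  · refine ⟨x / z, y / z, ?_⟩
    field_simp
    linear_combination hxyz

end Matrix

namespace PGL2

open Matrix

variable {K : Type*} [Field K]

theorem coe_eq_one_iff {g : GL (Fin 2) K} :
    (g : PGL2 K) = 1 ↔ (g : Matrix (Fin 2) (Fin 2) K) ∈ Set.range (scalar (Fin 2)) :=
  (QuotientGroup.eq_one_iff g).trans GeneralLinearGroup.mem_center_iff_val_mem_range_scalar

theorem trace_eq_zero_of_sq_eq_one {g : GL (Fin 2) K} (hg2 : (g : PGL2 K) ^ 2 = 1)
    (hg1 : (g : PGL2 K) ≠ 1) : (g : Matrix (Fin 2) (Fin 2) K).trace = 0 := by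
  refine trace_eq_zero_of_mul_self_mem_range_scalar ?_ (mt coe_eq_one_iff.mpr hg1)
  rw [← Units.val_mul, ← coe_eq_one_iff, QuotientGroup.mk_mul, ← sq, hg2]

def detClass : PGL2 K →* Kˣ ⧸ Subgroup.square Kˣ :=
  QuotientGroup.lift _ ((QuotientGroup.mk' _).comp GeneralLinearGroup.det) <| by
    rw [GeneralLinearGroup.center_eq_range_scalar]
    rintro _ ⟨s, rfl⟩
    rw [MonoidHom.mem_ker, MonoidHom.comp_apply, GeneralLinearGroup.det_scalar,
      QuotientGroup.mk'_apply, QuotientGroup.eq_one_iff, Fintype.card_fin]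
    exact IsSquare.sq s

theorem exists_lift_mul_self_eq_neg_one {x : PGL2 K} (hx2 : x ^ 2 = 1) (hx1 : x ≠ 1)
    (hδ : detClass x = 1) :
    ∃ g : GL (Fin 2) K, (g : PGL2 K) = x ∧ (g : Matrix (Fin 2) (Fin 2) K) * g = -1 := by
  obtain ⟨g, rfl⟩ := QuotientGroup.mk_surjective x
  obtain ⟨s, hs⟩ : IsSquare (GeneralLinearGroup.det g) := (QuotientGroup.eq_one_iff _).mp hδ
  set h := g * GeneralLinearGroup.scalar (Fin 2) s⁻¹
  have hh : (h : PGL2 K) = g := by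
    rw [QuotientGroup.mk_mul, mul_eq_left, QuotientGroup.eq_one_iff,
      GeneralLinearGroup.center_eq_range_scalar]
    exact ⟨_, rfl⟩
  have hdet : GeneralLinearGroup.det h = 1 := by
    rw [map_mul, hs, GeneralLinearGroup.det_scalar, Fintype.card_fin]
    group
  refine ⟨h, hh, ?_⟩
  rw [mul_self_eq_trace_smul_sub_det_smul_one, trace_eq_zero_of_sq_eq_one (hh ▸ hx2) (hh ▸ hx1),
    show (h : Matrix (Fin 2) (Fin 2) K).det = 1 from congrArg Units.val hdet]
  simp

theorem exists_sq_add_sq_eq_neg_one_of_isConj {a b : PGL2 K} (ha2 : a ^ 2 = 1) (ha1 : a ≠ 1)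
    (hb : IsConj a b) (hab : IsConj a (a * b)) : ∃ x y : K, x ^ 2 + y ^ 2 = -1 := by
  have hδb : detClass a = detClass b := isConj_iff_eq.mp (detClass.map_isConj hb)
  have hδab : detClass a = detClass (a * b) := isConj_iff_eq.mp (detClass.map_isConj hab)
  have hδb1 : detClass b = 1 := by rwa [map_mul, eq_comm, mul_eq_left] at hδab
  have hb2 : b ^ 2 = 1 := isConj_one_right.mp (ha2 ▸ hb.pow 2)
  have hb1 : b ≠ 1 := fun h ↦ ha1 (isConj_one_left.mp (h ▸ hb))
  have hab2 : (a * b) ^ 2 = 1 := isConj_one_right.mp (ha2 ▸ hab.pow 2)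
  have hab1 : a * b ≠ 1 := fun h ↦ ha1 (isConj_one_left.mp (h ▸ hab))
  obtain ⟨A, rfl, hA⟩ := exists_lift_mul_self_eq_neg_one ha2 ha1 (hδb.trans hδb1)
  obtain ⟨B, rfl, hB⟩ := exists_lift_mul_self_eq_neg_one hb2 hb1 hδb1
  refine exists_sq_add_sq_eq_neg_one_of_anticommute hA hB (eq_neg_of_add_eq_zero_left ?_)
  rw [mul_add_mul_eq_trace_mul_smul_one (trace_eq_zero_of_sq_eq_one ha2 ha1)
    (trace_eq_zero_of_sq_eq_one hb2 hb1), ← Units.val_mul,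
    trace_eq_zero_of_sq_eq_one hab2 hab1, zero_smul]

end PGL2

open Equiv Perm in
theorem alternatingGroup_fin_four_exists_isConj_mul :
    ∃ a b : alternatingGroup (Fin 4), a ^ 2 = 1 ∧ a ≠ 1 ∧ IsConj a b ∧ IsConj a (a * b) := by
  let a : alternatingGroup (Fin 4) := ⟨swap 0 1 * swap 2 3, mem_alternatingGroup.mpr (by decide)⟩
  let b : alternatingGroup (Fin 4) := ⟨swap 0 2 * swap 1 3, mem_alternatingGroup.mpr (by decide)⟩
  let σ : alternatingGroup (Fin 4) := ⟨swap 1 2 * swap 2 3, mem_alternatingGroup.mpr (by decide)⟩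
  exact ⟨a, b, by decide, by decide, isConj_iff.mpr ⟨σ, by decide⟩,
    isConj_iff.mpr ⟨σ * σ, by decide⟩⟩

theorem pgl2_A4_implies_sum_of_two_squares_general
    (K : Type*) [Field K]
    (H : Subgroup (PGL2 K)) (hH : Nonempty (H ≃* alternatingGroup (Fin 4))) :
    ∃ a b : K, a ^ 2 + b ^ 2 = -1 := by
  obtain ⟨e⟩ := hH
  obtain ⟨a, b, ha2, ha1, hb, hab⟩ := alternatingGroup_fin_four_exists_isConj_mul
  let φ : alternatingGroup (Fin 4) →* PGL2 K := H.subtype.comp e.symm.toMonoidHom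
  have hφ : Function.Injective φ := H.subtype_injective.comp e.symm.injective
  refine PGL2.exists_sq_add_sq_eq_neg_one_of_isConj (a := φ a) (b := φ b) ?_ ?_
    (φ.map_isConj hb) (map_mul φ a b ▸ φ.map_isConj hab)
  · rw [← map_pow, ha2, map_one]
  · exact (map_ne_one_iff φ hφ).mpr ha1

/-- If `char K ≠ 2, 3` and `PGL₂(K)` contains a subgroup isomorphic to the alternating
group `A₄`, then `−1` is a sum of two squares in `K`. -/
theorem pgl2_A4_implies_sum_of_two_squares
    (K : Type*) [Field K] (h2 : (2 : K) ≠ 0) (h3 : (3 : K) ≠ 0)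
    (H : Subgroup (PGL2 K)) (hH : Nonempty (H ≃* alternatingGroup (Fin 4))) :
    ∃ a b : K, a ^ 2 + b ^ 2 = -1 :=
  pgl2_A4_implies_sum_of_two_squares_general K H hH
end

section
/- Let K be a field with char(K) ∉ {2,3,5}. If PGL₂(K) contains a subgroup isomorphic to the alternating group A₅, then 5 is a square in K and −1 is a sum of two squares in K. -/
/-!
A nontrivial `g ∈ PGL₂(K)` with `g ^ n = 1` lifts to a non-scalar `M ∈ GL₂(K)` with `M ^ n`
scalar. By Cayley–Hamilton, `M ^ n = p • M - q • 1` with `p, q` polynomials in `t = tr M` and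
`d = det M`, so `p = 0`. For `n = 2` this says `t = 0`; for `n = 5` it says
`t⁴ - 3t²d + d² = 0`, i.e. `(2t² - 3d)² = 5d²`.

A Klein four-subgroup of `A₅` generated by two commutators lifts to trace-zero matrices `A`, `B`
of determinant `1` (determinant kills commutators) with `tr (A * B) = 0`. Then `A² = B² = -1` and
`AB = -BA`, so `M₂(K)` splits the quaternion algebra `(-1, -1)_K`, which forces
`-1` to be a sum of two squares.
-/

open Matrix
open scoped commutatorElement

namespace Matrix

section CayleyHamilton

variable {R : Type*} [CommRing R] (M : Matrix (Fin 2) (Fin 2) R)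

theorem sq_eq_trace_smul_sub_det_smul_one :
    M ^ 2 = M.trace • M - M.det • 1 := by
  nontriviality R
  have h := M.aeval_self_charpoly
  simp only [charpoly_fin_two, map_add, map_sub, map_pow, map_mul, Polynomial.aeval_X,
    Polynomial.aeval_C, Algebra.algebraMap_eq_smul_one, smul_mul_assoc, one_mul] at h
  rw [← sub_eq_zero, ← h]
  abel

theorem pow_five_eq_smul_sub_smul_one :
    M ^ 5 = (M.trace ^ 4 - 3 * M.trace ^ 2 * M.det + M.det ^ 2) • M
      - (M.trace ^ 3 * M.det - 2 * M.trace * M.det ^ 2) • 1 := by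
  have h2 := M.sq_eq_trace_smul_sub_det_smul_one
  have h3 : M ^ 3 = (M.trace ^ 2 - M.det) • M - (M.trace * M.det) • 1 := by
    rw [pow_succ, h2, sub_mul, smul_mul_assoc, smul_mul_assoc, one_mul, ← sq, h2]
    module
  rw [show 5 = 3 + 2 from rfl, pow_add, h3, h2, sub_mul, smul_mul_assoc, smul_mul_assoc, one_mul,
    mul_sub, mul_smul_comm, mul_smul_comm, mul_one, ← sq, h2]
  module

end CayleyHamilton

section Field

variable {K : Type*} [Field K]

theorem eq_zero_of_smul_sub_smul_one_mem_range_scalar {n : Type*} [Fintype n] [DecidableEq n]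
    {M : Matrix n n K} (hM : M ∉ Set.range (scalar n)) {a b : K}
    (h : a • M - b • 1 ∈ Set.range (scalar n)) : a = 0 := by
  obtain ⟨c, hc⟩ := h
  by_contra ha
  refine hM ⟨a⁻¹ * (c + b), ?_⟩
  rw [scalar_apply, ← smul_one_eq_diagonal] at hc ⊢
  rw [mul_smul, add_smul, hc, sub_add_cancel, smul_smul, inv_mul_cancel₀ ha, one_smul]

variable {M : Matrix (Fin 2) (Fin 2) K}

theorem trace_eq_zero_of_sq_mem_range_scalar (hM : M ∉ Set.range (scalar (Fin 2)))
    (hM2 : M ^ 2 ∈ Set.range (scalar (Fin 2))) : M.trace = 0 :=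
  eq_zero_of_smul_sub_smul_one_mem_range_scalar hM (M.sq_eq_trace_smul_sub_det_smul_one ▸ hM2)

theorem isSquare_five_of_pow_five_mem_range_scalar (hdet : M.det ≠ 0)
    (hM : M ∉ Set.range (scalar (Fin 2))) (hM5 : M ^ 5 ∈ Set.range (scalar (Fin 2))) :
    IsSquare (5 : K) := by
  have hp := eq_zero_of_smul_sub_smul_one_mem_range_scalar hM
    (M.pow_five_eq_smul_sub_smul_one ▸ hM5)
  refine ⟨(2 * M.trace ^ 2 - 3 * M.det) / M.det, ?_⟩
  field_simp
  linear_combination (-4 : K) * hp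

theorem exists_sq_add_sq_eq_neg_one_of_trace_eq_zero {A B : Matrix (Fin 2) (Fin 2) K}
    (hA : A.trace = 0) (hB : B.trace = 0) (hAB : (A * B).trace = 0)
    (hdA : A.det = 1) (hdB : B.det = 1) : ∃ x y : K, x ^ 2 + y ^ 2 = -1 := by
  simp only [trace_fin_two, det_fin_two, mul_apply, Fin.sum_univ_two] at hA hB hAB hdA hdB
  rw [eq_neg_of_add_eq_zero_right hA] at hAB hdA
  rw [eq_neg_of_add_eq_zero_right hB] at hAB hdB
  -- With `A = !![a, b; c, -a]`, `B = !![d, e; f, -d]`: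
  -- `(b d - a e)² + e² + b² = -b e · tr (A * B)` modulo the two determinant equations.
  by_cases hb : A 0 1 = 0
  · exact ⟨A 0 0, 0, by linear_combination (-1 : K) * hdA - A 1 0 * hb⟩
  · refine ⟨(A 0 1 * B 0 0 - A 0 0 * B 0 1) / A 0 1, B 0 1 / A 0 1, ?_⟩
    field_simp
    linear_combination (-(B 0 1 ^ 2)) * hdA + (-(A 0 1 ^ 2)) * hdB + (-(A 0 1 * B 0 1)) * hAB

end Field

end Matrix

theorem MonoidHom.map_mem_commutatorSet {G H : Type*} [Group G] [Group H] (f : G →* H) {g : G}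
    (hg : g ∈ commutatorSet G) : f g ∈ commutatorSet H := by
  obtain ⟨u, v, rfl⟩ := hg
  exact ⟨f u, f v, (map_commutatorElement f u v).symm⟩

namespace PGL2

variable {K : Type*} [Field K]

theorem val_pow_mem_range_scalar_iff {W : GL (Fin 2) K} {n : ℕ} :
    (W : Matrix (Fin 2) (Fin 2) K) ^ n ∈ Set.range (scalar (Fin 2)) ↔ (W : PGL2 K) ^ n = 1 := by
  rw [← QuotientGroup.mk_pow, QuotientGroup.eq_one_iff,
    Matrix.GeneralLinearGroup.mem_center_iff_val_mem_range_scalar, Units.val_pow_eq_pow_val]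

theorem val_notMem_range_scalar_of_orderOf_ne_one {W : GL (Fin 2) K}
    (h : orderOf (W : PGL2 K) ≠ 1) : (W : Matrix (Fin 2) (Fin 2) K) ∉ Set.range (scalar (Fin 2)) := by
  rw [← pow_one (W : Matrix (Fin 2) (Fin 2) K), val_pow_mem_range_scalar_iff, pow_one]
  exact mt orderOf_eq_one_iff.mpr h

theorem isSquare_five_of_orderOf_eq_five {g : PGL2 K} (hg : orderOf g = 5) : IsSquare (5 : K) := by
  obtain ⟨W, rfl⟩ := QuotientGroup.mk_surjective g
  exact isSquare_five_of_pow_five_mem_range_scalar W.det_ne_zero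
    (val_notMem_range_scalar_of_orderOf_ne_one (by rw [hg]; decide))
    (val_pow_mem_range_scalar_iff.mpr (orderOf_dvd_iff_pow_eq_one.mp hg.dvd))

theorem trace_eq_zero_of_orderOf_eq_two {W : GL (Fin 2) K} (h : orderOf (W : PGL2 K) = 2) :
    (W : Matrix (Fin 2) (Fin 2) K).trace = 0 :=
  trace_eq_zero_of_sq_mem_range_scalar
    (val_notMem_range_scalar_of_orderOf_ne_one (by rw [h]; decide))
    (val_pow_mem_range_scalar_iff.mpr (orderOf_dvd_iff_pow_eq_one.mp h.dvd))

theorem exists_lift_det_eq_one_of_mem_commutatorSet {g : PGL2 K} (hg : g ∈ commutatorSet (PGL2 K)) :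
    ∃ W : GL (Fin 2) K, (W : PGL2 K) = g ∧ (W : Matrix (Fin 2) (Fin 2) K).det = 1 := by
  obtain ⟨u, v, rfl⟩ := hg
  obtain ⟨U, rfl⟩ := QuotientGroup.mk_surjective u
  obtain ⟨V, rfl⟩ := QuotientGroup.mk_surjective v
  refine ⟨⁅U, V⁆, map_commutatorElement (QuotientGroup.mk' _) U V, ?_⟩
  have h : Matrix.GeneralLinearGroup.det ⁅U, V⁆ = 1 := by
    rw [map_commutatorElement, commutatorElement_eq_one_iff_commute]
    exact Commute.all _ _
  rw [← Matrix.GeneralLinearGroup.val_det_apply, h, Units.val_one]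

theorem exists_sq_add_sq_eq_neg_one {g h : PGL2 K} (hgc : g ∈ commutatorSet (PGL2 K))
    (hhc : h ∈ commutatorSet (PGL2 K)) (hg : orderOf g = 2) (hh : orderOf h = 2)
    (hgh : orderOf (g * h) = 2) : ∃ x y : K, x ^ 2 + y ^ 2 = -1 := by
  obtain ⟨U, rfl, hU⟩ := exists_lift_det_eq_one_of_mem_commutatorSet hgc
  obtain ⟨V, rfl, hV⟩ := exists_lift_det_eq_one_of_mem_commutatorSet hhc
  refine exists_sq_add_sq_eq_neg_one_of_trace_eq_zero (trace_eq_zero_of_orderOf_eq_two hg)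
    (trace_eq_zero_of_orderOf_eq_two hh) ?_ hU hV
  rw [← Units.val_mul]
  exact trace_eq_zero_of_orderOf_eq_two hgh

end PGL2

namespace alternatingGroup

theorem exists_orderOf_eq_five : ∃ x : alternatingGroup (Fin 5), orderOf x = 5 :=
  haveI : Fact (Nat.Prime 5) := ⟨by norm_num⟩
  ⟨⟨finRotate 5, Equiv.Perm.mem_alternatingGroup.mpr (by decide)⟩,
    orderOf_eq_prime (by decide) (by decide)⟩

theorem exists_kleinFour_pair_mem_commutatorSet : ∃ x y : alternatingGroup (Fin 5),
    x ∈ commutatorSet _ ∧ y ∈ commutatorSet _ ∧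
    orderOf x = 2 ∧ orderOf y = 2 ∧ orderOf (x * y) = 2 := by
  let mk (σ : Equiv.Perm (Fin 5)) (hσ : Equiv.Perm.sign σ = 1) : alternatingGroup (Fin 5) :=
    ⟨σ, hσ⟩
  refine ⟨mk (Equiv.swap 0 1 * Equiv.swap 2 3) (by decide),
    mk (Equiv.swap 0 2 * Equiv.swap 1 3) (by decide),
    ⟨mk (Equiv.swap 0 1 * Equiv.swap 1 3) (by decide),
      mk (Equiv.swap 0 1 * Equiv.swap 1 2) (by decide), by decide⟩,
    ⟨mk (Equiv.swap 0 2 * Equiv.swap 2 3) (by decide),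
      mk (Equiv.swap 0 2 * Equiv.swap 2 1) (by decide), by decide⟩,
    orderOf_eq_prime (by decide) (by decide), orderOf_eq_prime (by decide) (by decide),
    orderOf_eq_prime (by decide) (by decide)⟩

end alternatingGroup

theorem pgl2_A5_implies_sqrt5_and_sum_of_two_squares_general
    (K : Type*) [Field K]
    (H : Subgroup (PGL2 K)) (hH : Nonempty (H ≃* alternatingGroup (Fin 5))) :
    IsSquare (5 : K) ∧ ∃ a b : K, a ^ 2 + b ^ 2 = -1 := by
  obtain ⟨e⟩ := hH
  let φ : alternatingGroup (Fin 5) →* PGL2 K := H.subtype.comp e.symm.toMonoidHom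
  have hφ : Function.Injective φ := H.subtype_injective.comp e.symm.injective
  obtain ⟨x, hx⟩ := alternatingGroup.exists_orderOf_eq_five
  obtain ⟨y, z, hyc, hzc, hy, hz, hyz⟩ := alternatingGroup.exists_kleinFour_pair_mem_commutatorSet
  rw [← orderOf_injective φ hφ] at hx hy hz hyz
  rw [map_mul] at hyz
  exact ⟨PGL2.isSquare_five_of_orderOf_eq_five hx, PGL2.exists_sq_add_sq_eq_neg_one
    (φ.map_mem_commutatorSet hyc) (φ.map_mem_commutatorSet hzc) hy hz hyz⟩

/-- If `char K ∉ {2,3,5}` and `PGL₂(K)` contains a subgroup isomorphic to the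
alternating group `A₅`, then `5` is a square in `K` and `−1` is a sum of two
squares in `K`. -/
theorem pgl2_A5_implies_sqrt5_and_sum_of_two_squares
    (K : Type*) [Field K] (h2 : (2 : K) ≠ 0) (h3 : (3 : K) ≠ 0) (h5 : (5 : K) ≠ 0)
    (H : Subgroup (PGL2 K)) (hH : Nonempty (H ≃* alternatingGroup (Fin 5))) :
    IsSquare (5 : K) ∧ ∃ a b : K, a ^ 2 + b ^ 2 = -1 :=
  pgl2_A5_implies_sqrt5_and_sum_of_two_squares_general K H hH
end

section
/- Let K be a field of characteristic ≠ 2 in which −1 is a sum of two squares and 5 is a square. Then the special orthogonal group SO₃(K) of the standard quadratic form x² + y² + z² contains a subgroup isomorphic to A₅. -/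
/-!
The alternating group `A₅` acts on `5 × 5` matrices by permuting rows and columns
simultaneously, preserving the Frobenius form. Over `ℚ(√5)` the skew-symmetric matrices with zero
row sums split into the two three-dimensional icosahedral representations of `A₅`, and one of them
has a Frobenius-orthogonal basis over `ℤ[√5]`. Its coefficient matrices, read off by a coframe
dual to that basis up to the factor `8`, are `8` times orthogonal matrices, so they map to
orthogonal matrices over every field containing `√5` in which `2 ≠ 0`. Invariance of the subspace
only has to be checked on two generators of `A₅`. As `A₅` is simple, the representation is
faithful once it is nontrivial, and as `A₅` is perfect, all its determinants are `1`.
-/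

open Matrix Equiv

section StableFrame

variable {R X κ : Type*} [CommRing R] [Fintype X] [Fintype κ]

/-- The columns of `A` span an `M`-stable subspace, on which `L` recovers coordinates up to the
factor `c`. -/
def StabilizesFrame (c : R) (L : Matrix κ X R) (A : Matrix X κ R) (M : Matrix X X R) : Prop :=
  c • (M * A) = A * (L * M * A)

variable {c N : R} {L : Matrix κ X R} {A : Matrix X κ R} {M M' : Matrix X X R}

theorem StabilizesFrame.compress_mul (h : StabilizesFrame c L A M') :
    c • (L * (M * M') * A) = L * M * A * (L * M' * A) := by
  calc c • (L * (M * M') * A) = L * M * (c • (M' * A)) := by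
        simp only [Matrix.mul_smul, Matrix.mul_assoc]
    _ = L * M * A * (L * M' * A) := by rw [h]; simp only [Matrix.mul_assoc]

theorem stabilizesFrame_one [DecidableEq X] [DecidableEq κ] (hLA : L * A = c • 1) :
    StabilizesFrame c L A 1 := by
  rw [StabilizesFrame, Matrix.mul_one, Matrix.one_mul, hLA, Matrix.mul_smul, Matrix.mul_one]

theorem StabilizesFrame.mul [NoZeroDivisors R] (hc : c ≠ 0) (h : StabilizesFrame c L A M)
    (h' : StabilizesFrame c L A M') : StabilizesFrame c L A (M * M') := by
  apply smul_right_injective (Matrix X κ R) hc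
  calc c • c • (M * M' * A) = c • (M * (c • (M' * A))) := by
        rw [Matrix.mul_smul, Matrix.mul_assoc]
    _ = c • (M * A) * (L * M' * A) := by rw [h', Matrix.smul_mul]; simp only [Matrix.mul_assoc]
    _ = A * (c • (L * (M * M') * A)) := by
        rw [h, h'.compress_mul, Matrix.mul_assoc]
    _ = c • (A * (L * (M * M') * A)) := Matrix.mul_smul _ _ _

theorem StabilizesFrame.compress_transpose_mul_self [DecidableEq X] [DecidableEq κ] [NoZeroDivisors R]
    (hN : N ≠ 0) (hA : Aᵀ * A = N • 1) (hM : Mᵀ * M = 1) (h : StabilizesFrame c L A M) :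
    (L * M * A)ᵀ * (L * M * A) = c ^ 2 • 1 := by
  apply smul_right_injective (Matrix κ κ R) hN
  set Γ := L * M * A
  calc N • (Γᵀ * Γ) = (A * Γ)ᵀ * (A * Γ) := by
        rw [transpose_mul A, Matrix.mul_assoc Γᵀ, ← Matrix.mul_assoc Aᵀ, hA, Matrix.smul_mul,
          Matrix.one_mul, Matrix.mul_smul]
    _ = c ^ 2 • (Aᵀ * (Mᵀ * M) * A) := by
        rw [← h, transpose_smul, Matrix.smul_mul, Matrix.mul_smul, smul_smul, ← sq,
          transpose_mul]
        simp only [Matrix.mul_assoc]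
    _ = N • c ^ 2 • 1 := by rw [hM, Matrix.mul_one, hA, smul_comm]

theorem StabilizesFrame.of_mem_closure {G : Type*} [Group G] [Finite G] [DecidableEq X]
    [DecidableEq κ] [NoZeroDivisors R] (hc : c ≠ 0) (hLA : L * A = c • 1) (ρ : G →* Matrix X X R)
    {S : Set G} (hS : ∀ g ∈ S, StabilizesFrame c L A (ρ g)) {g : G} (hg : g ∈ Subgroup.closure S) :
    StabilizesFrame c L A (ρ g) := by
  let stabilizer : Submonoid G :=
    { carrier := {g | StabilizesFrame c L A (ρ g)}
      one_mem' := by simpa only [Set.mem_ofPred_eq, map_one] using stabilizesFrame_one hLA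
      mul_mem' := fun ha hb => by simpa only [Set.mem_ofPred_eq, map_mul] using ha.mul hc hb }
  rw [← Subgroup.mem_toSubmonoid, Subgroup.closure_toSubmonoid_of_finite] at hg
  exact (Submonoid.closure_le (S := stabilizer)).2 hS hg

end StableFrame

theorem Matrix.permMatrixHom_transpose_mul_self {n R : Type*} [Fintype n] [DecidableEq n]
    [NonAssocSemiring R] (σ : Perm n) : (permMatrixHom σ)ᵀ * permMatrixHom (R := R) σ = 1 := by
  rw [permMatrixHom_apply, transpose_permMatrix, ← permMatrix_mul, inv_inv, inv_mul_cancel,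
    permMatrix_one]

def Matrix.rescaledMapHom {G R K κ : Type*} [Monoid G] [CommRing R] [Field K] [Fintype κ]
    [DecidableEq κ] (ψ : R →+* K) {c : R} (hc : ψ c ≠ 0) (Γ : G → Matrix κ κ R)
    (one : Γ 1 = c • 1) (mul : ∀ g h, c • Γ (g * h) = Γ g * Γ h) : G →* Matrix κ κ K where
  toFun g := (ψ c)⁻¹ • (Γ g).map ψ
  map_one' := by
    rw [one, Matrix.map_smul' _ _ _ (map_mul ψ), Matrix.map_one _ (map_zero ψ) (map_one ψ),
      smul_smul, inv_mul_cancel₀ hc, one_smul]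
  map_mul' g h := by
    have key : ψ c • (Γ (g * h)).map ψ = (Γ g).map ψ * (Γ h).map ψ := by
      rw [← Matrix.map_smul' _ _ _ (map_mul ψ), mul, Matrix.map_mul]
    rw [Matrix.smul_mul, Matrix.mul_smul, ← key, smul_smul, smul_smul, mul_assoc,
      inv_mul_cancel₀ hc, mul_one]

theorem Matrix.rescaledMapHom_transpose_mul_self {G R K κ : Type*} [Monoid G] [CommRing R]
    [Field K] [Fintype κ] [DecidableEq κ] (ψ : R →+* K) {c : R} (hc : ψ c ≠ 0)
    {Γ : G → Matrix κ κ R} (one : Γ 1 = c • 1) (mul : ∀ g h, c • Γ (g * h) = Γ g * Γ h) {g : G}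
    (hg : (Γ g)ᵀ * Γ g = c ^ 2 • 1) :
    (rescaledMapHom ψ hc Γ one mul g)ᵀ * rescaledMapHom ψ hc Γ one mul g = 1 := by
  simp only [rescaledMapHom, MonoidHom.coe_mk, OneHom.coe_mk, transpose_smul, Matrix.smul_mul,
    Matrix.mul_smul, ← transpose_map, ← Matrix.map_mul, hg, smul_smul]
  rw [Matrix.map_smul' _ _ _ (map_mul ψ), Matrix.map_one _ (map_zero ψ) (map_one ψ), smul_smul,
    map_pow, show (ψ c)⁻¹ * (ψ c)⁻¹ * ψ c ^ 2 = 1 by field_simp, one_smul]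

theorem Matrix.det_eq_one_of_commutator_eq_top {G n K : Type*} [Group G] [Fintype n]
    [DecidableEq n] [CommRing K] (hG : commutator G = ⊤) (f : G →* GL n K) (g : G) :
    (f g : Matrix n n K).det = 1 :=
  congrArg Units.val <|
    Abelianization.commutator_subset_ker (GeneralLinearGroup.det.comp f) (hG ▸ Subgroup.mem_top g)

theorem IsSimpleGroup.eq_top_of_index_dvd_two {G : Type*} [Group G] [IsSimpleGroup G]
    {H : Subgroup G} (hH : H.index ∣ 2) (hbot : H ≠ ⊥) : H = ⊤ := by
  rcases (Nat.dvd_prime Nat.prime_two).1 hH with h1 | h2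
  · exact Subgroup.index_eq_one.1 h1
  · exact (Subgroup.normal_of_index_eq_two h2).eq_bot_or_eq_top.resolve_left hbot

theorem MonoidHom.injective_of_isSimpleGroup {G H : Type*} [Group G] [IsSimpleGroup G]
    [MulOneClass H] (f : G →* H) {g : G} (hg : f g ≠ 1) : Function.Injective f :=
  (f.ker_eq_bot_iff).1 <| f.normal_ker.eq_bot_or_eq_top.resolve_right fun h =>
    hg (f.mem_ker.1 (h ▸ Subgroup.mem_top g))

theorem Matrix.sum_mulVec_sq_of_transpose_mul_self {n K : Type*} [Fintype n] [DecidableEq n]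
    [CommSemiring K] {M : Matrix n n K} (hM : Mᵀ * M = 1) (v : n → K) :
    ∑ i, (M *ᵥ v) i ^ 2 = ∑ i, v i ^ 2 := by
  simp only [sq]
  change (M *ᵥ v) ⬝ᵥ (M *ᵥ v) = v ⬝ᵥ v
  rw [dotProduct_mulVec, ← vecMul_transpose, vecMul_vecMul, hM, vecMul_one]

namespace alternatingGroup

def doubleTransposition : alternatingGroup (Fin 5) :=
  ⟨swap 0 1 * swap 2 3, Perm.mem_alternatingGroup.mpr (by decide)⟩

def fiveCycle : alternatingGroup (Fin 5) :=
  ⟨finRotate 5, Perm.mem_alternatingGroup.mpr (by decide)⟩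

theorem closure_doubleTransposition_fiveCycle :
    Subgroup.closure {doubleTransposition, fiveCycle} = ⊤ := by
  set H := Subgroup.closure {doubleTransposition, fiveCycle}
  have hτ : doubleTransposition ∈ H := Subgroup.subset_closure (by simp)
  have hσ : fiveCycle ∈ H := Subgroup.subset_closure (by simp)
  have : Fact (Nat.Prime 5) := ⟨by norm_num⟩
  have h2 : orderOf doubleTransposition = 2 := orderOf_eq_prime (by decide) (by decide)
  have h3 : orderOf (doubleTransposition * fiveCycle) = 3 :=
    orderOf_eq_prime (by decide) (by decide)
  have h5 : orderOf fiveCycle = 5 := orderOf_eq_prime (by decide) (by decide)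
  replace h2 := h2 ▸ H.orderOf_dvd_natCard hτ
  replace h3 := h3 ▸ H.orderOf_dvd_natCard (H.mul_mem hτ hσ)
  replace h5 := h5 ▸ H.orderOf_dvd_natCard hσ
  obtain ⟨k, hk⟩ : 30 ∣ Nat.card H :=
    Nat.Coprime.mul_dvd_of_dvd_of_dvd (by norm_num)
      (Nat.Coprime.mul_dvd_of_dvd_of_dvd (by norm_num) h2 h3) h5
  have hcard : Nat.card H * H.index = 60 := by
    rw [H.card_mul_index, nat_card_alternatingGroup]
    simp [Nat.factorial]
  refine IsSimpleGroup.eq_top_of_index_dvd_two (Dvd.intro_left k ?_) ?_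
  · rw [hk] at hcard
    linarith
  · exact fun h => (by decide : doubleTransposition ≠ 1) ((Subgroup.eq_bot_iff_forall H).1 h _ hτ)

end alternatingGroup

open alternatingGroup

instance : Zsqrtd.Nonsquare 5 := ⟨fun n h => by
  have : n ≤ 2 := by nlinarith
  interval_cases n <;> omega⟩

instance : IsDomain (ℤ√5) := inferInstanceAs (IsDomain (ℤ√((5 : ℕ) : ℤ)))

/-- Columns: the lines fixed by `(01)(23)`, `(02)(13)` and `(03)(12)` in one icosahedral summand
of the skew-symmetric `5 × 5` matrices; the entries are `2φ², 2, 2φ` up to sign, with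
`φ = (1 + √5) / 2`. -/
def icoFrame : Matrix (Fin 5 × Fin 5) (Fin 3) (ℤ√5) :=
  of fun x j => ![
    !![0, 0, ⟨3, 1⟩, -2, ⟨-1, -1⟩; 0, 0, -2, ⟨3, 1⟩, ⟨-1, -1⟩; ⟨-3, -1⟩, 2, 0, 0, ⟨1, 1⟩;
      2, ⟨-3, -1⟩, 0, 0, ⟨1, 1⟩; ⟨1, 1⟩, ⟨1, 1⟩, ⟨-1, -1⟩, ⟨-1, -1⟩, 0],
    !![0, 2, 0, ⟨-3, -1⟩, ⟨1, 1⟩; -2, 0, ⟨3, 1⟩, 0, ⟨-1, -1⟩; 0, ⟨-3, -1⟩, 0, 2, ⟨1, 1⟩;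
      ⟨3, 1⟩, 0, -2, 0, ⟨-1, -1⟩; ⟨-1, -1⟩, ⟨1, 1⟩, ⟨-1, -1⟩, ⟨1, 1⟩, 0],
    !![0, ⟨3, 1⟩, -2, 0, ⟨-1, -1⟩; ⟨-3, -1⟩, 0, 0, 2, ⟨1, 1⟩; 2, 0, 0, ⟨-3, -1⟩, ⟨1, 1⟩;
      0, -2, ⟨3, 1⟩, 0, ⟨-1, -1⟩; ⟨1, 1⟩, ⟨-1, -1⟩, ⟨-1, -1⟩, ⟨1, 1⟩, 0]] j x.1 x.2

/-- The Frobenius form is `40 (3 + √5)` on `icoFrame` and degenerates modulo `√5`, so coordinates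
are read off from the entries `(0,1)`, `(0,2)`, `(1,3)` instead of by orthogonal projection. -/
def icoCoframe : Matrix (Fin 3) (Fin 5 × Fin 5) (ℤ√5) :=
  of fun i x => ![
    !![0, 0, ⟨3, -1⟩, 0, 0; 0, 0, 0, ⟨3, -1⟩, 0; 0, 0, 0, 0, 0; 0, 0, 0, 0, 0; 0, 0, 0, 0, 0],
    !![0, 4, ⟨3, 1⟩, 0, 0; 0, 0, 0, ⟨-3, -1⟩, 0; 0, 0, 0, 0, 0; 0, 0, 0, 0, 0; 0, 0, 0, 0, 0],
    !![0, 0, -2, 0, 0; 0, 0, 0, 2, 0; 0, 0, 0, 0, 0; 0, 0, 0, 0, 0; 0, 0, 0, 0, 0]] i x.1 x.2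

def pairPermRep : alternatingGroup (Fin 5) →* Matrix (Fin 5 × Fin 5) (Fin 5 × Fin 5) (ℤ√5) :=
  permMatrixHom.comp (MulAction.toPermHom (alternatingGroup (Fin 5)) (Fin 5 × Fin 5))

theorem icoCoframe_mul_icoFrame : icoCoframe * icoFrame = (8 : ℤ√5) • 1 := by
  decide +kernel

theorem icoFrame_transpose_mul_self : icoFrameᵀ * icoFrame = (⟨120, 40⟩ : ℤ√5) • 1 := by
  decide +kernel

theorem stabilizesFrame_pairPermRep (g : alternatingGroup (Fin 5)) :
    StabilizesFrame 8 icoCoframe icoFrame (pairPermRep g) := by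
  refine StabilizesFrame.of_mem_closure (by decide) icoCoframe_mul_icoFrame pairPermRep ?_
    (closure_doubleTransposition_fiveCycle ▸ Subgroup.mem_top g)
  simp only [Set.mem_insert_iff, Set.mem_singleton_iff, forall_eq_or_imp, forall_eq]
  constructor <;> unfold StabilizesFrame <;> decide +kernel

def icoCoeff (g : alternatingGroup (Fin 5)) : Matrix (Fin 3) (Fin 3) (ℤ√5) :=
  icoCoframe * pairPermRep g * icoFrame

theorem icoCoeff_one : icoCoeff 1 = (8 : ℤ√5) • 1 := by
  rw [icoCoeff, map_one, Matrix.mul_one, icoCoframe_mul_icoFrame]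

theorem icoCoeff_mul (g h : alternatingGroup (Fin 5)) :
    (8 : ℤ√5) • icoCoeff (g * h) = icoCoeff g * icoCoeff h := by
  rw [icoCoeff, map_mul]
  exact (stabilizesFrame_pairPermRep h).compress_mul

theorem icoCoeff_transpose_mul_self (g : alternatingGroup (Fin 5)) :
    (icoCoeff g)ᵀ * icoCoeff g = (8 : ℤ√5) ^ 2 • 1 :=
  (stabilizesFrame_pairPermRep g).compress_transpose_mul_self (by decide)
    icoFrame_transpose_mul_self (permMatrixHom_transpose_mul_self _)

theorem icoCoeff_doubleTransposition : icoCoeff doubleTransposition 1 1 = -8 := by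
  decide +kernel

section Field

variable {K : Type*} [Field K] (ψ : ℤ√5 →+* K) (h8 : ψ 8 ≠ 0)

def icosahedralRep : alternatingGroup (Fin 5) →* Matrix (Fin 3) (Fin 3) K :=
  rescaledMapHom ψ h8 icoCoeff icoCoeff_one icoCoeff_mul

theorem icosahedralRep_transpose_mul_self (g : alternatingGroup (Fin 5)) :
    (icosahedralRep ψ h8 g)ᵀ * icosahedralRep ψ h8 g = 1 :=
  rescaledMapHom_transpose_mul_self ψ h8 _ _ (icoCoeff_transpose_mul_self g)

theorem icosahedralRep_doubleTransposition_ne_one (h2 : (2 : K) ≠ 0) :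
    icosahedralRep ψ h8 doubleTransposition ≠ 1 := by
  intro h
  have h11 := congrFun (congrFun h 1) 1
  simp only [icosahedralRep, rescaledMapHom, MonoidHom.coe_mk, OneHom.coe_mk, Matrix.smul_apply,
    map_apply, icoCoeff_doubleTransposition, one_apply_eq, smul_eq_mul, map_neg] at h11
  rw [mul_neg, inv_mul_cancel₀ h8] at h11
  exact h2 (by linear_combination -h11)

end Field

theorem SO3_contains_A5_general
    (K : Type*) [Field K] (h2 : (2 : K) ≠ 0)
    (h5 : IsSquare (5 : K)) :
    ∃ f : alternatingGroup (Fin 5) →* GL (Fin 3) K,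
      Function.Injective f ∧
      ∀ g : alternatingGroup (Fin 5),
        Matrix.det ((f g : GL (Fin 3) K) : Matrix (Fin 3) (Fin 3) K) = 1 ∧
        ∀ v : Fin 3 → K,
          (∑ i, (((f g : GL (Fin 3) K) : Matrix (Fin 3) (Fin 3) K).mulVec v i) ^ 2)
            = ∑ i, v i ^ 2 := by
  obtain ⟨r, hr⟩ := h5
  let ψ : ℤ√5 →+* K := Zsqrtd.lift ⟨r, by rw [← hr]; norm_num⟩
  have h8 : ψ 8 ≠ 0 := by
    rw [map_ofNat, show (8 : K) = 2 ^ 3 by norm_num]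
    exact pow_ne_zero 3 h2
  let f := (icosahedralRep ψ h8).toHomUnits
  refine ⟨f, f.injective_of_isSimpleGroup (g := doubleTransposition) fun h => ?_, fun g => ⟨?_, ?_⟩⟩
  · exact icosahedralRep_doubleTransposition_ne_one ψ h8 h2 (congrArg Units.val h)
  · exact det_eq_one_of_commutator_eq_top (commutator_alternatingGroup_eq_top (by simp)) f g
  · exact sum_mulVec_sq_of_transpose_mul_self (icosahedralRep_transpose_mul_self ψ h8 g)

/-- If `char K ≠ 2`, `−1` is a sum of two squares in `K` and `5` is a square in `K`,
then the special orthogonal group of the standard quadratic form `x² + y² + z²` over `K`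
(matrices of determinant `1` preserving the form) contains a subgroup isomorphic
to `A₅`, i.e. there is an injective homomorphism from `A₅` into `GL₃(K)` landing in
that special orthogonal group. -/
theorem SO3_contains_A5
    (K : Type*) [Field K] (h2 : (2 : K) ≠ 0)
    (hsq : ∃ a b : K, a ^ 2 + b ^ 2 = -1) (h5 : IsSquare (5 : K)) :
    ∃ f : alternatingGroup (Fin 5) →* GL (Fin 3) K,
      Function.Injective f ∧
      ∀ g : alternatingGroup (Fin 5),
        Matrix.det ((f g : GL (Fin 3) K) : Matrix (Fin 3) (Fin 3) K) = 1 ∧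
        ∀ v : Fin 3 → K,
          (∑ i, (((f g : GL (Fin 3) K) : Matrix (Fin 3) (Fin 3) K).mulVec v i) ^ 2)
            = ∑ i, v i ^ 2 :=
  SO3_contains_A5_general K h2 h5
end

section
/- Let G be a group acting on a group A by automorphisms (compatible with a Galois action), H a subgroup of G(K) ⊆ G(K_s) with centralizer Z in G(K_s), and let X = { g ∈ G(K_s) : g⁻¹·σ(g) ∈ Z for all σ ∈ Gal(K_s/K) }. Then the map g ↦ (conjugation by g restricted to H) induces a bijection between the double coset space G(K)\X/Z and the set of embeddings H → G(K) that are conjugate to the inclusion by an element of G(K_s), modulo conjugacy by G(K). -/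
/-!
Conjugation `g ↦ (h ↦ g h g⁻¹)` maps `X` onto the embeddings in question: since `H` is
Galois-fixed, `σ` fixes every `g h g⁻¹` exactly when `g⁻¹ σ(g)` centralizes `H`. Two elements
give the same embedding iff they differ on the right by an element of `Z`, and conjugating an
embedding by `k ∈ G(K)` corresponds to replacing `g` by `k g`; so the relation on `X` is the
pull-back of the relation on embeddings, and the induced map of quotients is a bijection.
-/

theorem Quot.map_injective_of_surjective {α β : Type*} {ra : α → α → Prop} {rb : β → β → Prop}
    {f : α → β} (hf : f.Surjective) (hrb : ∀ b, rb b b)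
    (hr : ∀ a a', ra a a' ↔ rb (f a) (f a')) :
    (Quot.map f fun a a' ↦ (hr a a').1).Injective := by
  have eqvGen_lift : ∀ b b', Relation.EqvGen rb b b' →
      ∀ a a', f a = b → f a' = b' → Relation.EqvGen ra a a' := by
    intro b b' hbb'
    induction hbb' with
    | rel b b' h =>
      rintro a a' rfl rfl
      exact .rel _ _ ((hr a a').2 h)
    | refl b =>
      rintro a a' rfl ha'
      exact .rel _ _ ((hr a a').2 (ha' ▸ hrb _))
    | symm b b' _ ih => exact fun a a' ha ha' ↦ (ih a' a ha' ha).symm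
    | trans b b' b'' _ _ ih ih' =>
      intro a a'' ha ha''
      obtain ⟨a', rfl⟩ := hf b'
      exact (ih a a' ha rfl).trans _ _ _ (ih' a' a'' rfl ha'')
  rintro ⟨a⟩ ⟨a'⟩ h
  exact Quot.eqvGen_sound (eqvGen_lift _ _ (Quot.eqvGen_exact h) a a' rfl rfl)

section Conjugation

variable {G : Type*} [Group G] {S : Set G}

theorem conj_eq_conj_iff_inv_mul_mem_centralizer {a b : G} :
    (∀ h ∈ S, a * h * a⁻¹ = b * h * b⁻¹) ↔ a⁻¹ * b ∈ Subgroup.centralizer S := by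
  rw [Subgroup.mem_centralizer_iff]
  refine forall₂_congr fun h _ ↦ ?_
  rw [← mul_left_inj b, ← mul_right_inj a⁻¹]
  simp only [mul_assoc, inv_mul_cancel_left, inv_mul_cancel, mul_one]

theorem exists_eq_mul_mul_mem_centralizer_iff (K : Subgroup G) (a b : G) :
    (∃ k ∈ K, ∃ z ∈ Subgroup.centralizer S, b = k * a * z) ↔
      ∃ k ∈ K, ∀ h ∈ S, b * h * b⁻¹ = k * (a * h * a⁻¹) * k⁻¹ := by
  refine exists_congr fun k ↦ and_congr_right fun _ ↦ ?_
  have : ∀ h, k * (a * h * a⁻¹) * k⁻¹ = (k * a) * h * (k * a)⁻¹ := fun h ↦ by group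
  simp_rw [this, eq_comm (a := b * _ * _), conj_eq_conj_iff_inv_mul_mem_centralizer]
  exact ⟨by rintro ⟨z, hz, rfl⟩; simpa [mul_assoc] using hz, fun hz ↦ ⟨_, hz, by group⟩⟩

theorem conj_smul_eq_self_iff {Γ : Type*} [Monoid Γ] [MulDistribMulAction Γ G]
    (hS : ∀ σ : Γ, ∀ h ∈ S, σ • h = h) (g : G) :
    (∀ σ : Γ, ∀ h ∈ S, σ • (g * h * g⁻¹) = g * h * g⁻¹) ↔
      ∀ σ : Γ, g⁻¹ * σ • g ∈ Subgroup.centralizer S := by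
  refine forall_congr' fun σ ↦ ?_
  rw [← conj_eq_conj_iff_inv_mul_mem_centralizer]
  refine forall₂_congr fun h hh ↦ ?_
  rw [smul_mul', smul_mul', smul_inv', hS σ h hh, eq_comm]

end Conjugation

/-- `Γ` plays the role of `Gal(K_s/K)` acting on `G = G(K_s)`, and `GK`, its subgroup of fixed
points, that of `G(K)`. -/
theorem double_coset_bijection_embeddings
    (Γ G : Type*) [Group Γ] [Group G] [MulDistribMulAction Γ G]
    (GK : Subgroup G) (hGK : ∀ g : G, g ∈ GK ↔ ∀ σ : Γ, σ • g = g)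
    (H : Subgroup G) (hH : H ≤ GK)
    (Z : Subgroup G) (hZ : Z = Subgroup.centralizer (H : Set G))
    (X : Set G) (hX : X = {g : G | ∀ σ : Γ, g⁻¹ * σ • g ∈ Z})
    (E : Set (H →* G))
    (hE : E = {j : H →* G | (∀ h : H, j h ∈ GK) ∧ ∃ g : G, ∀ h : H, j h = g * h * g⁻¹})
    (rX : X → X → Prop)
    (hrX : ∀ g g' : X, rX g g' ↔ ∃ k ∈ GK, ∃ z ∈ Z, (g' : G) = k * g * z)
    (rE : E → E → Prop)
    (hrE : ∀ j j' : E, rE j j' ↔ ∃ k ∈ GK, ∀ h : H, (j' : H →* G) h = k * ((j : H →* G) h) * k⁻¹) :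
    ∃ e : Quot rX ≃ Quot rE,
      ∀ (g : X) (j : E), (∀ h : H, (j : H →* G) h = (g : G) * h * (g : G)⁻¹) →
        e (Quot.mk rX g) = Quot.mk rE j := by
  have mem_X_iff (g : G) : g ∈ X ↔ ∀ h : H, g * h * g⁻¹ ∈ GK := by
    rw [hX, Set.mem_ofPred_eq, hZ, ← conj_smul_eq_self_iff fun σ h hh ↦ (hGK h).1 (hH hh) σ]
    simp only [hGK, Subtype.forall, SetLike.mem_coe]
    exact ⟨fun hg h hh σ ↦ hg σ h hh, fun hg σ h hh ↦ hg h hh σ⟩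
  have mem_E_iff (j : H →* G) :
      j ∈ E ↔ (∀ h : H, j h ∈ GK) ∧ ∃ g : G, ∀ h : H, j h = g * h * g⁻¹ := by
    rw [hE, Set.mem_ofPred_eq]
  let conj (g : X) : E :=
    ⟨(MulAut.conj (g : G)).toMonoidHom.comp H.subtype,
      (mem_E_iff _).2 ⟨(mem_X_iff g).1 g.2, g, fun _ ↦ rfl⟩⟩
  have conj_surjective : conj.Surjective := by
    rintro ⟨j, hj⟩
    obtain ⟨hjK, g, hg⟩ := (mem_E_iff j).1 hj
    exact ⟨⟨g, (mem_X_iff g).2 fun h ↦ hg h ▸ hjK h⟩,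
      Subtype.ext (MonoidHom.ext fun h ↦ (hg h).symm)⟩
  have rX_iff (g g' : X) : rX g g' ↔ rE (conj g) (conj g') := by
    rw [hrX, hrE, hZ, exists_eq_mul_mul_mem_centralizer_iff]
    simp [conj]
  have rE_refl (j : E) : rE j j := (hrE j j).2 ⟨1, GK.one_mem, by simp⟩
  refine ⟨.ofBijective _ ⟨Quot.map_injective_of_surjective conj_surjective rE_refl rX_iff,
    Quot.map_surjective _ conj_surjective⟩, fun g j hgj ↦ ?_⟩
  exact congrArg (Quot.mk rE) (Subtype.ext (MonoidHom.ext fun h ↦ (hgj h).symm))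
end

section
/- Let K be a field of characteristic ≠ 2. For α ∈ K*, the homography h_α: z ↦ α/z, i.e., the class of [[0, α],[1, 0]] in PGL₂(K), is an involution, and two such involutions h_α, h_β are conjugate in PGL₂(K) if and only if α/β is a square in K*. -/
open Matrix

namespace Matrix.GeneralLinearGroup

variable {n R : Type*} [Fintype n] [DecidableEq n] [CommRing R]

theorem mk_eq_mk_iff_exists_val_eq_smul {g h : GL n R} :
    (g : GL n R ⧸ Subgroup.center (GL n R)) = h ↔ ∃ c : R, (h : Matrix n n R) = c • g := by
  rw [QuotientGroup.eq, mem_center_iff_val_mem_range_scalar]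
  refine exists_congr fun c => ?_
  rw [scalar_apply, ← smul_one_eq_diagonal, Units.val_mul, eq_comm, Units.inv_mul_eq_iff_eq_mul,
    mul_smul_comm, mul_one]

theorem isConj_mk_iff {A B : GL n R} :
    IsConj (A : GL n R ⧸ Subgroup.center (GL n R)) B ↔
      ∃ (P : GL n R) (c : R), (B : Matrix n n R) * P = c • (P * A : Matrix n n R) := by
  simp only [isConj_iff, QuotientGroup.mk_surjective.exists, ← QuotientGroup.mk_mul,
    mul_inv_eq_iff_eq_mul, mk_eq_mk_iff_exists_val_eq_smul, Units.val_mul]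

theorem orderOf_mk_eq_two [Nontrivial R] {a : R} {A : GL (Fin 2) R}
    (hA : (A : Matrix (Fin 2) (Fin 2) R) = !![0, a; 1, 0]) :
    orderOf (A : GL (Fin 2) R ⧸ Subgroup.center (GL (Fin 2) R)) = 2 := by
  refine orderOf_eq_prime ?_ ?_
  · rw [← QuotientGroup.mk_pow, ← QuotientGroup.mk_one, eq_comm, mk_eq_mk_iff_exists_val_eq_smul]
    exact ⟨a, by simp [sq, hA, one_fin_two]⟩
  · rw [← QuotientGroup.mk_one, Ne, mk_eq_mk_iff_exists_val_eq_smul]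
    rintro ⟨c, hc⟩
    simpa [hA] using congrFun (congrFun hc 0) 0

end Matrix.GeneralLinearGroup

section AntidiagonalConjugacy

variable {K : Type*} [Field K]

theorem eq_mul_self_mul_of_antidiag_mul_eq_smul {a b c : K} {P : Matrix (Fin 2) (Fin 2) K}
    (hP : P.det ≠ 0) (h : !![0, b; 1, 0] * P = c • (P * !![0, a; 1, 0])) : b = c * c * a := by
  rw [P.eta_fin_two] at h hP
  rw [det_fin_two_of] at hP
  simp at h
  obtain ⟨⟨h00, h01⟩, h10, h11⟩ := h
  by_contra hne
  have hne' : b - c * c * a ≠ 0 := sub_ne_zero.2 hne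
  have hr : P 1 0 = 0 := by
    refine (mul_eq_zero.1 ?_).resolve_left hne'
    linear_combination h00 + c * h11
  have hs : P 1 1 = 0 := by
    refine (mul_eq_zero.1 ?_).resolve_left hne'
    linear_combination h01 + c * a * h10
  exact hP (by rw [hr, hs]; ring)

theorem exists_antidiag_mul_eq_smul_mul_antidiag_iff {a b : K} (ha : a ≠ 0) (hb : b ≠ 0) :
    (∃ (P : GL (Fin 2) K) (c : K),
      !![0, b; 1, 0] * (P : Matrix (Fin 2) (Fin 2) K) = c • (P * !![0, a; 1, 0])) ↔
      IsSquare (b / a) := by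
  constructor
  · rintro ⟨P, c, h⟩
    refine ⟨c, ?_⟩
    rw [div_eq_iff ha, eq_mul_self_mul_of_antidiag_mul_eq_smul (isUnits_det_units P).ne_zero h]
  · rintro ⟨c, hc⟩
    rw [div_eq_iff ha] at hc
    have hc0 : c ≠ 0 := by rintro rfl; simp [hc] at hb
    refine ⟨GeneralLinearGroup.mkOfDetNeZero !![c, 0; 0, 1] (by simpa), c, ?_⟩
    simp [hc]
    ring

end AntidiagonalConjugacy

theorem involution_conj_iff_square_general
    (K : Type*) [Field K]
    (a b : K) (ha : a ≠ 0) (hb : b ≠ 0)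
    (A B : GL (Fin 2) K)
    (hA : (A : Matrix (Fin 2) (Fin 2) K) = !![0, a; 1, 0])
    (hB : (B : Matrix (Fin 2) (Fin 2) K) = !![0, b; 1, 0]) :
    orderOf (QuotientGroup.mk A : PGL2 K) = 2 ∧
    (IsConj (QuotientGroup.mk A : PGL2 K) (QuotientGroup.mk B) ↔ IsSquare (a / b)) := by
  refine ⟨GeneralLinearGroup.orderOf_mk_eq_two hA, ?_⟩
  rw [GeneralLinearGroup.isConj_mk_iff, hA, hB, ← isSquare_inv, inv_div]
  exact exists_antidiag_mul_eq_smul_mul_antidiag_iff ha hb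

/-- For `char K ≠ 2` and `α, β ∈ K*`, the homography `z ↦ α/z` (class of
`[[0,α],[1,0]]` in `PGL₂(K)`) is an involution, and the involutions associated to
`α` and `β` are conjugate in `PGL₂(K)` iff `α/β` is a square in `K`. -/
theorem involution_conj_iff_square
    (K : Type*) [Field K] (h2 : (2 : K) ≠ 0)
    (a b : K) (ha : a ≠ 0) (hb : b ≠ 0)
    (A B : GL (Fin 2) K)
    (hA : (A : Matrix (Fin 2) (Fin 2) K) = !![0, a; 1, 0])
    (hB : (B : Matrix (Fin 2) (Fin 2) K) = !![0, b; 1, 0]) :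
    orderOf (QuotientGroup.mk A : PGL2 K) = 2 ∧
    (IsConj (QuotientGroup.mk A : PGL2 K) (QuotientGroup.mk B) ↔ IsSquare (a / b)) :=
  involution_conj_iff_square_general K a b ha hb A B hA hB
end

section
/- Let K be a separably closed field of characteristic prime to r. The normalizer in PGL₂(K) of the dihedral subgroup D_r generated by z ↦ 1/z and z ↦ ζz (ζ a primitive r-th root of unity, r > 2) is the dihedral group D_{2r} generated by z ↦ 1/z and z ↦ ηz, where η is a primitive 2r-th root of unity. -/
/-!
Write `s = swap` for `z ↦ 1/z` and `diag a` for `z ↦ a z`, so that `D_r = ⟨s, t⟩` with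
`t = diag ζ = u ^ 2`, `u = diag η`. Since `s` inverts `u`, the group `⟨s, u⟩` is dihedral of
order `4r` and normalizes `⟨s, u ^ 2⟩`. Conversely, let `g` normalize `D_r`. The elements of
`D_r` outside `⟨t⟩` are involutions, while `g t g⁻¹` has order `r > 2`, so `g t g⁻¹` is a power
of `t`. A matrix conjugating `diag(ζ, 1)` to a multiple of a diagonal matrix is diagonal or
antidiagonal (as `ζ ≠ 1`), so `g` or `s g` equals some `diag a`. Finally
`diag a · s · (diag a)⁻¹ = diag (a ^ 2) · s` lies in `D_r` only if `a ^ 2 = ζ ^ k = η ^ (2k)`,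
i.e. `a = ± η ^ k`, and `-1 = η ^ r`.
-/

open Subgroup

namespace Subgroup

variable {G : Type*} [Group G]

theorem mem_normalizer_closure_of_conj {A : Set G} {g : G}
    (h : ∀ a ∈ A, g * a * g⁻¹ ∈ closure A) (h' : ∀ a ∈ A, g⁻¹ * a * g ∈ closure A) :
    g ∈ normalizer (closure A : Set G) := by
  have conj_mem : ∀ x : G, (∀ a ∈ A, x * a * x⁻¹ ∈ closure A) →
      ∀ y ∈ closure A, x * y * x⁻¹ ∈ closure A := fun x hx =>
    (closure_le ((closure A).comap (MulAut.conj x).toMonoidHom)).mpr hx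
  refine mem_normalizer_iff.mpr fun y => ⟨conj_mem g h y, fun hy => ?_⟩
  simpa [mul_assoc] using conj_mem g⁻¹ (by simpa using h') _ hy

section Dihedral

variable {s u : G}

theorem mul_zpow_eq_zpow_neg_mul (hsu : s * u = u⁻¹ * s) (k : ℤ) :
    s * u ^ k = u ^ (-k) * s := by
  simpa [zpow_neg, inv_zpow] using (SemiconjBy.zpow_right hsu k).eq

theorem mul_mul_inv_eq_sq_mul (hsu : s * u = u⁻¹ * s) : u * s * u⁻¹ = u ^ 2 * s := by
  rw [mul_assoc, ← zpow_neg_one, mul_zpow_eq_zpow_neg_mul hsu, neg_neg, zpow_one, ← mul_assoc,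
    sq]

variable (hs : s * s = 1) (hsu : s * u = u⁻¹ * s)
include hs hsu

theorem mem_closure_pair_iff {x : G} :
    x ∈ closure {s, u} ↔ ∃ k : ℤ, x = u ^ k ∨ x = u ^ k * s := by
  refine ⟨fun hx => ?_, ?_⟩
  · induction hx using closure_induction with
    | mem x hx =>
      rcases hx with rfl | rfl
      · exact ⟨0, .inr (by simp)⟩
      · exact ⟨1, .inl (by simp)⟩
    | one => exact ⟨0, .inl (by simp)⟩
    | mul x y _ _ hx hy =>
      obtain ⟨a, rfl | rfl⟩ := hx <;> obtain ⟨b, rfl | rfl⟩ := hy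
      · exact ⟨a + b, .inl (zpow_add u a b).symm⟩
      · exact ⟨a + b, .inr (by rw [zpow_add, mul_assoc])⟩
      · exact ⟨a - b, .inr (by rw [mul_assoc, mul_zpow_eq_zpow_neg_mul hsu, ← mul_assoc,
          ← zpow_add, sub_eq_add_neg])⟩
      · exact ⟨a - b, .inl (by rw [mul_assoc, ← mul_assoc s, mul_zpow_eq_zpow_neg_mul hsu,
          mul_assoc, hs, mul_one, ← zpow_add, sub_eq_add_neg])⟩
    | inv x _ hx =>
      obtain ⟨a, rfl | rfl⟩ := hx
      · exact ⟨-a, .inl (zpow_neg u a).symm⟩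
      · refine ⟨a, .inr ?_⟩
        rw [mul_inv_rev, inv_eq_of_mul_eq_one_right hs, ← zpow_neg,
          mul_zpow_eq_zpow_neg_mul hsu, neg_neg]
  · rintro ⟨k, rfl | rfl⟩
    · exact zpow_mem (subset_closure (by simp)) k
    · exact mul_mem (zpow_mem (subset_closure (by simp)) k) (subset_closure (by simp))

theorem mem_zpowers_of_mem_closure_pair {x : G} (hx : x ∈ closure {s, u}) (hx2 : x * x ≠ 1) :
    x ∈ zpowers u := by
  obtain ⟨k, rfl | rfl⟩ := (mem_closure_pair_iff hs hsu).mp hx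
  · exact zpow_mem_zpowers u k
  · refine absurd ?_ hx2
    rw [mul_assoc, ← mul_assoc s, mul_zpow_eq_zpow_neg_mul hsu, mul_assoc, hs, mul_one,
      ← zpow_add, add_neg_cancel, zpow_zero]

theorem closure_pair_le_normalizer_closure_pair_sq :
    closure {s, u} ≤ normalizer (closure {s, u ^ 2} : Set G) := by
  have hsu2 : s * u ^ 2 = (u ^ 2)⁻¹ * s := by
    rw [(SemiconjBy.pow_right hsu 2).eq, inv_pow]
  have hs' : s⁻¹ = s := inv_eq_of_mul_eq_one_right hs
  have mem : ∀ x, (∃ k : ℤ, x = (u ^ 2) ^ k ∨ x = (u ^ 2) ^ k * s) → x ∈ closure {s, u ^ 2} :=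
    fun x => (mem_closure_pair_iff hs hsu2).mpr
  rw [closure_le]
  rintro g (rfl | rfl) <;> refine mem_normalizer_closure_of_conj ?_ ?_ <;>
    rintro a (rfl | rfl) <;> apply mem
  · exact ⟨0, .inr (by group)⟩
  · exact ⟨-1, .inl (by rw [hs', hsu2, mul_assoc, hs]; group)⟩
  · exact ⟨0, .inr (by group)⟩
  · exact ⟨-1, .inl (by rw [hs', hsu2, mul_assoc, hs]; group)⟩
  · exact ⟨1, .inr (by rw [mul_mul_inv_eq_sq_mul hsu, zpow_one])⟩
  · exact ⟨1, .inl (by group)⟩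
  · exact ⟨-1, .inr (by rw [mul_assoc, hsu]; group)⟩
  · exact ⟨1, .inl (by group)⟩

end Dihedral

end Subgroup

section DihedralGroupLift

variable {G : Type*} [Group G] {s u : G} {n : ℕ}

theorem zpow_eq_zpow_of_intCast_eq (hn : orderOf u = n) {a b : ℤ} (h : (a : ZMod n) = b) :
    u ^ a = u ^ b :=
  zpow_eq_zpow_iff_modEq.mpr (hn ▸ (ZMod.intCast_eq_intCast_iff a b n).mp h)

theorem zpow_zmod_cast_add (hn : orderOf u = n) (i j : ZMod n) :
    u ^ ((i + j).cast : ℤ) = u ^ (i.cast : ℤ) * u ^ (j.cast : ℤ) := by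
  rw [← zpow_add]
  exact zpow_eq_zpow_of_intCast_eq hn (by push_cast [ZMod.intCast_zmod_cast]; rfl)

theorem zpow_zmod_cast_sub (hn : orderOf u = n) (i j : ZMod n) :
    u ^ ((j - i).cast : ℤ) = u ^ (-(i.cast : ℤ)) * u ^ (j.cast : ℤ) := by
  rw [← zpow_add]
  exact zpow_eq_zpow_of_intCast_eq hn (by push_cast [ZMod.intCast_zmod_cast]; ring)

variable (hs : s * s = 1) (hsu : s * u = u⁻¹ * s) (hn : orderOf u = n)

def DihedralGroup.lift : DihedralGroup n →* G where
  toFun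
    | .r i => u ^ (i.cast : ℤ)
    | .sr i => s * u ^ (i.cast : ℤ)
  map_one' := show u ^ ((0 : ZMod n).cast : ℤ) = 1 by rw [ZMod.cast_zero, zpow_zero]
  map_mul' := by
    rintro (i | i) (j | j)
    · exact zpow_zmod_cast_add hn i j
    · show s * u ^ ((j - i).cast : ℤ) = u ^ (i.cast : ℤ) * (s * u ^ (j.cast : ℤ))
      rw [zpow_zmod_cast_sub hn, ← mul_assoc, mul_zpow_eq_zpow_neg_mul hsu, neg_neg, mul_assoc]
    · show s * u ^ ((i + j).cast : ℤ) = s * u ^ (i.cast : ℤ) * u ^ (j.cast : ℤ)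
      rw [zpow_zmod_cast_add hn, mul_assoc]
    · show u ^ ((j - i).cast : ℤ) = s * u ^ (i.cast : ℤ) * (s * u ^ (j.cast : ℤ))
      rw [zpow_zmod_cast_sub hn, mul_zpow_eq_zpow_neg_mul hsu, mul_assoc, ← mul_assoc s s, hs,
        one_mul]

include hs hsu hn

theorem DihedralGroup.lift_injective (hsu' : s ∉ zpowers u) :
    Function.Injective (DihedralGroup.lift hs hsu hn) := by
  refine (injective_iff_map_eq_one _).mpr ?_
  rintro (i | i) h
  · have hi : u ^ (i.cast : ℤ) = u ^ (0 : ℤ) := h.trans (zpow_zero u).symm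
    rw [zpow_eq_zpow_iff_modEq, hn, ← ZMod.intCast_eq_intCast_iff, ZMod.intCast_zmod_cast] at hi
    rw [hi, Int.cast_zero, DihedralGroup.r_zero]
  · exact absurd (eq_inv_of_mul_eq_one_left h ▸ inv_mem (zpow_mem_zpowers u _)) hsu'

theorem DihedralGroup.range_lift : (DihedralGroup.lift hs hsu hn).range = closure {s, u} := by
  refine le_antisymm ?_ ((closure_le _).mpr (Set.pair_subset ?_ ?_))
  · rintro _ ⟨i | i, rfl⟩
    · exact zpow_mem (subset_closure (by simp)) _
    · exact mul_mem (subset_closure (by simp)) (zpow_mem (subset_closure (by simp)) _)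
  · exact ⟨.sr 0, show s * u ^ ((0 : ZMod n).cast : ℤ) = s by simp⟩
  · refine ⟨.r 1, (zpow_eq_zpow_of_intCast_eq hn ?_).trans (zpow_one u)⟩
    rw [ZMod.intCast_zmod_cast, Int.cast_one]

theorem Subgroup.nonempty_closure_pair_mulEquiv_dihedralGroup (hsu' : s ∉ zpowers u) :
    Nonempty (closure {s, u} ≃* DihedralGroup n) :=
  ⟨(MulEquiv.subgroupCongr (DihedralGroup.range_lift hs hsu hn).symm).trans
    (MonoidHom.ofInjective (DihedralGroup.lift_injective hs hsu hn hsu')).symm⟩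

end DihedralGroupLift

theorem IsPrimitiveRoot.mem_zpowers_of_sq_eq_sq {R : Type*} [CommRing R] [IsDomain R] {r : ℕ}
    (hr : 0 < r) {η a : Rˣ} (hη : IsPrimitiveRoot η (2 * r)) {k : ℤ} (h : a ^ 2 = (η ^ k) ^ 2) :
    a ∈ zpowers η := by
  have hneg : ((η ^ r : Rˣ) : R) = -1 :=
    (coe_units_iff.mpr (hη.pow (by omega) (mul_comm 2 r))).eq_neg_one_of_two_right
  have h' : (a : R) ^ 2 = ((η ^ k : Rˣ) : R) ^ 2 := by exact_mod_cast congrArg Units.val h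
  rcases sq_eq_sq_iff_eq_or_eq_neg.mp h' with h' | h'
  · exact ⟨k, Units.ext h'.symm⟩
  · refine ⟨r + k, Units.ext ?_⟩
    show ((η ^ ((r : ℤ) + k) : Rˣ) : R) = a
    rw [zpow_add, zpow_natCast, Units.val_mul, hneg, h', neg_one_mul]

theorem Matrix.fin_two_diag_or_antidiag_of_diagonal_mul_eq_mul_diagonal {K : Type*} [Field K]
    {M : Matrix (Fin 2) (Fin 2) K} (hM : M.det ≠ 0) {p q : Fin 2 → K} (hp : p 0 ≠ p 1)
    (h : diagonal q * M = M * diagonal p) :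
    (M 0 1 = 0 ∧ M 1 0 = 0) ∨ (M 0 0 = 0 ∧ M 1 1 = 0) := by
  have key : ∀ i j, M i j ≠ 0 → q i = p j := fun i j hij =>
    mul_right_cancel₀ hij (by simpa [mul_comm] using congrFun (congrFun h i) j)
  have row : ∀ i, M i 0 = 0 ∨ M i 1 = 0 := fun i => by
    by_contra! hne
    exact hp ((key i 0 hne.1).symm.trans (key i 1 hne.2))
  rw [det_fin_two] at hM
  rcases row 0 with h0 | h0 <;> rcases row 1 with h1 | h1 <;> simp_all

namespace PGL2

variable {K : Type*} [Field K]

theorem mk_eq_mk_iff {A B : GL (Fin 2) K} :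
    (A : PGL2 K) = B ↔ ∃ c : Kˣ, (B : Matrix (Fin 2) (Fin 2) K) = (c : K) • (A : Matrix _ _ K) := by
  rw [QuotientGroup.eq, Matrix.GeneralLinearGroup.center_eq_range_scalar]
  refine exists_congr fun c => ?_
  rw [eq_inv_mul_iff_mul_eq, Units.ext_iff, eq_comm]
  simp [Matrix.smul_eq_mul_diagonal]

def diagGL : Kˣ →* GL (Fin 2) K where
  toFun a := ⟨!![(a : K), 0; 0, 1], !![((a⁻¹ : Kˣ) : K), 0; 0, 1],
    by simp [Matrix.one_fin_two], by simp [Matrix.one_fin_two]⟩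
  map_one' := Units.ext (by simp [Matrix.one_fin_two])
  map_mul' a b := Units.ext (by simp)

theorem coe_diagGL (a : Kˣ) :
    (diagGL a : Matrix (Fin 2) (Fin 2) K) = !![(a : K), 0; 0, 1] := rfl

def swapGL : GL (Fin 2) K :=
  ⟨!![0, 1; 1, 0], !![0, 1; 1, 0], by simp [Matrix.one_fin_two], by simp [Matrix.one_fin_two]⟩

theorem coe_swapGL : ((swapGL : GL (Fin 2) K) : Matrix (Fin 2) (Fin 2) K) = !![0, 1; 1, 0] :=
  rfl

def diag : Kˣ →* PGL2 K := (QuotientGroup.mk' _).comp diagGL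

theorem diag_apply (a : Kˣ) : diag a = (diagGL a : PGL2 K) := rfl

def swap : PGL2 K := (swapGL : GL (Fin 2) K)

theorem diag_injective : Function.Injective (diag : Kˣ →* PGL2 K) := by
  intro a b h
  obtain ⟨c, hc⟩ := mk_eq_mk_iff.mp h
  have hc1 : (1 : K) = c := by simpa [coe_diagGL] using congrFun (congrFun hc 1) 1
  exact Units.ext (by simpa [coe_diagGL, ← hc1] using (congrFun (congrFun hc 0) 0).symm)

theorem swap_mul_self : swap * swap = (1 : PGL2 K) := by
  rw [swap, ← QuotientGroup.mk_mul, ← QuotientGroup.mk_one, mk_eq_mk_iff]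
  exact ⟨1, by simp [coe_swapGL, Matrix.one_fin_two]⟩

theorem swap_mul_diag (a : Kˣ) : swap * diag a = (diag a)⁻¹ * swap := by
  rw [← map_inv, swap, diag_apply, diag_apply, ← QuotientGroup.mk_mul, ← QuotientGroup.mk_mul,
    mk_eq_mk_iff]
  refine ⟨a⁻¹, ?_⟩
  simp only [Units.val_mul, coe_diagGL, coe_swapGL]
  ext i j; fin_cases i <;> fin_cases j <;> simp

theorem swap_notMem_range_diag : swap ∉ (diag : Kˣ →* PGL2 K).range := by
  rintro ⟨a, h⟩
  obtain ⟨c, hc⟩ := mk_eq_mk_iff.mp h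
  simpa [coe_diagGL, coe_swapGL] using congrFun (congrFun hc 0) 1

theorem mk_mem_range_diag {M : GL (Fin 2) K} (h01 : (M : Matrix (Fin 2) (Fin 2) K) 0 1 = 0)
    (h10 : (M : Matrix (Fin 2) (Fin 2) K) 1 0 = 0) :
    (M : PGL2 K) ∈ (diag : Kˣ →* PGL2 K).range := by
  have hdet := Matrix.GeneralLinearGroup.det_ne_zero M
  rw [Matrix.det_fin_two, h01, h10, mul_zero, sub_zero] at hdet
  have h00 := left_ne_zero_of_mul hdet
  have h11 := right_ne_zero_of_mul hdet
  refine ⟨Units.mk0 _ (div_ne_zero h00 h11), mk_eq_mk_iff.mpr ⟨Units.mk0 _ h11, ?_⟩⟩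
  ext i j; fin_cases i <;> fin_cases j <;> simp [coe_diagGL, h01, h10, mul_div_cancel₀ _ h11]

theorem mem_range_diag_or_of_conj_mem_range_diag {g : PGL2 K} {α : Kˣ} (hα : α ≠ 1)
    (h : g * diag α * g⁻¹ ∈ (diag : Kˣ →* PGL2 K).range) :
    g ∈ (diag : Kˣ →* PGL2 K).range ∨ swap * g ∈ (diag : Kˣ →* PGL2 K).range := by
  obtain ⟨β, hβ⟩ := h
  obtain ⟨M, rfl⟩ := QuotientGroup.mk_surjective g
  have hmk : ((diagGL β * M : GL (Fin 2) K) : PGL2 K) = (M * diagGL α : GL (Fin 2) K) := by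
    rw [QuotientGroup.mk_mul, QuotientGroup.mk_mul, ← diag_apply, ← diag_apply, hβ,
      inv_mul_cancel_right]
  obtain ⟨c, hc⟩ := mk_eq_mk_iff.mp hmk
  have hM : Matrix.diagonal ((c : K) • ![(β : K), 1]) * M = M * Matrix.diagonal ![(α : K), 1] := by
    rw [Matrix.diagonal_smul, Matrix.smul_mul, Matrix.diagonal_vec2, Matrix.diagonal_vec2,
      ← coe_diagGL, ← coe_diagGL, ← Units.val_mul, ← Units.val_mul, hc]
  rcases Matrix.fin_two_diag_or_antidiag_of_diagonal_mul_eq_mul_diagonal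
      (Matrix.GeneralLinearGroup.det_ne_zero M) (by simpa using hα) hM with ⟨h01, h10⟩ | ⟨h00, h11⟩
  · exact .inl (mk_mem_range_diag h01 h10)
  · refine .inr ?_
    rw [swap, ← QuotientGroup.mk_mul]
    exact mk_mem_range_diag (by simp [coe_swapGL, Matrix.mul_apply, h11])
      (by simp [coe_swapGL, Matrix.mul_apply, h00])


variable {r : ℕ} {η : Kˣ}

theorem diag_mem_closure_of_mem_normalizer (hr : 0 < r) (hη : IsPrimitiveRoot η (2 * r)) {a : Kˣ}
    (h : diag a ∈ normalizer (closure {swap, diag η ^ 2} : Set (PGL2 K))) :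
    diag a ∈ closure {swap, diag η} := by
  have hsu2 : swap * diag η ^ 2 = (diag η ^ 2)⁻¹ * swap := by
    rw [← map_pow]; exact swap_mul_diag _
  have hconj := (mem_normalizer_iff.mp h swap).mp (subset_closure (by simp))
  rw [mul_mul_inv_eq_sq_mul (swap_mul_diag a)] at hconj
  obtain ⟨k, hk | hk⟩ := (mem_closure_pair_iff swap_mul_self hsu2).mp hconj
  · refine absurd ⟨(a ^ 2)⁻¹ * (η ^ 2) ^ k, ?_⟩ swap_notMem_range_diag
    rw [map_mul, map_inv, map_zpow, map_pow, map_pow, ← hk, inv_mul_cancel_left]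
  · have ha : a ^ 2 = (η ^ k) ^ 2 := diag_injective (by
      rw [map_pow, map_pow, map_zpow, mul_right_cancel hk]
      group)
    obtain ⟨m, rfl⟩ := hη.mem_zpowers_of_sq_eq_sq hr ha
    rw [map_zpow]
    exact zpow_mem (subset_closure (by simp)) m

theorem mem_range_diag_or_of_mem_normalizer (hr : 2 < r) (hη : IsPrimitiveRoot η (2 * r))
    {g : PGL2 K} (hg : g ∈ normalizer (closure {swap, diag η ^ 2} : Set (PGL2 K))) :
    g ∈ (diag : Kˣ →* PGL2 K).range ∨ swap * g ∈ (diag : Kˣ →* PGL2 K).range := by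
  have hsu2 : swap * diag η ^ 2 = (diag η ^ 2)⁻¹ * swap := by
    rw [← map_pow]; exact swap_mul_diag _
  have hη4 : diag η ^ 2 * diag η ^ 2 ≠ 1 := by
    rw [← pow_add, ← map_pow, map_ne_one_iff _ diag_injective]
    exact hη.pow_ne_one_of_pos_of_lt (by norm_num) (by omega)
  obtain ⟨k, hk⟩ : g * diag η ^ 2 * g⁻¹ ∈ zpowers (diag η ^ 2) := by
    refine mem_zpowers_of_mem_closure_pair swap_mul_self hsu2
      ((mem_normalizer_iff.mp hg _).mp (subset_closure (by simp))) fun h => hη4 ?_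
    rwa [← conj_eq_one_iff (a := g), show g * (diag η ^ 2 * diag η ^ 2) * g⁻¹ =
      g * diag η ^ 2 * g⁻¹ * (g * diag η ^ 2 * g⁻¹) by group]
  refine mem_range_diag_or_of_conj_mem_range_diag (α := η ^ 2)
    (hη.pow_ne_one_of_pos_of_lt (by norm_num) (by omega)) ⟨(η ^ 2) ^ k, ?_⟩
  rw [map_zpow, map_pow]
  exact hk

theorem normalizer_closure_le (hr : 2 < r) (hη : IsPrimitiveRoot η (2 * r)) :
    normalizer (closure {swap, diag η ^ 2} : Set (PGL2 K)) ≤ closure {swap, diag η} := by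
  have hswap : swap ∈ closure {swap, diag η} := subset_closure (by simp)
  intro g hg
  rcases mem_range_diag_or_of_mem_normalizer hr hη hg with ⟨a, rfl⟩ | ⟨a, ha⟩
  · exact diag_mem_closure_of_mem_normalizer (by omega) hη hg
  · have hsg : swap * g ∈ normalizer (closure {swap, diag η ^ 2} : Set (PGL2 K)) :=
      mul_mem (closure_pair_le_normalizer_closure_pair_sq swap_mul_self (swap_mul_diag η) hswap) hg
    rw [← ha] at hsg
    have := mul_mem hswap (diag_mem_closure_of_mem_normalizer (by omega) hη hsg)
    rwa [ha, ← mul_assoc, swap_mul_self, one_mul] at this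

end PGL2

open PGL2 in
theorem normalizer_of_dihedral_general
    (K : Type*) [Field K] (r : ℕ) (hr : 2 < r)
    (ζ η : K) (hη : IsPrimitiveRoot η (2 * r)) (hηζ : η ^ 2 = ζ)
    (S Tζ Tη : GL (Fin 2) K)
    (hS : (S : Matrix (Fin 2) (Fin 2) K) = !![0, 1; 1, 0])
    (hTζ : (Tζ : Matrix (Fin 2) (Fin 2) K) = Matrix.diagonal ![ζ, 1])
    (hTη : (Tη : Matrix (Fin 2) (Fin 2) K) = Matrix.diagonal ![η, 1]) :
    Subgroup.normalizer
        (Subgroup.closure {(QuotientGroup.mk S : PGL2 K), QuotientGroup.mk Tζ})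
      = Subgroup.closure {(QuotientGroup.mk S : PGL2 K), QuotientGroup.mk Tη} ∧
    Nonempty
      ((Subgroup.closure {(QuotientGroup.mk S : PGL2 K), QuotientGroup.mk Tη})
        ≃* DihedralGroup (2 * r)) := by
  obtain ⟨η, rfl⟩ := hη.isUnit (by omega)
  subst hηζ
  replace hη : IsPrimitiveRoot η (2 * r) := IsPrimitiveRoot.coe_units_iff.mp hη
  have hS' : (S : PGL2 K) = swap := congrArg _ (Units.ext hS)
  have hTη' : (Tη : PGL2 K) = diag η :=
    congrArg _ (Units.ext (hTη.trans (Matrix.diagonal_vec2 _ _)))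
  have hTζ' : (Tζ : PGL2 K) = diag η ^ 2 := by
    rw [← map_pow]
    exact congrArg _ (Units.ext (hTζ.trans (by rw [Matrix.diagonal_vec2]; rfl)))
  rw [hS', hTη', hTζ']
  refine ⟨le_antisymm (normalizer_closure_le hr hη)
    (closure_pair_le_normalizer_closure_pair_sq swap_mul_self (swap_mul_diag η)),
    nonempty_closure_pair_mulEquiv_dihedralGroup swap_mul_self (swap_mul_diag η) ?_
      fun h => swap_notMem_range_diag (zpowers_le.mpr (MonoidHom.mem_range.mpr ⟨η, rfl⟩) h)⟩
  rw [orderOf_injective diag diag_injective η, hη.eq_orderOf]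

/-- Over a separably closed field `K` of characteristic prime to `r > 2`, the normalizer
in `PGL₂(K)` of the dihedral subgroup generated by `z ↦ 1/z` and `z ↦ ζz` (with `ζ` a
primitive `r`-th root of unity) is the dihedral group of order `4r` generated by
`z ↦ 1/z` and `z ↦ ηz`, where `η` is a primitive `2r`-th root of unity with `η² = ζ`. -/
theorem normalizer_of_dihedral
    (K : Type*) [Field K] [IsSepClosed K] (r : ℕ) (hr : 2 < r) (hchar : (r : K) ≠ 0)
    (ζ η : K) (hζ : IsPrimitiveRoot ζ r) (hη : IsPrimitiveRoot η (2 * r)) (hηζ : η ^ 2 = ζ)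
    (S Tζ Tη : GL (Fin 2) K)
    (hS : (S : Matrix (Fin 2) (Fin 2) K) = !![0, 1; 1, 0])
    (hTζ : (Tζ : Matrix (Fin 2) (Fin 2) K) = Matrix.diagonal ![ζ, 1])
    (hTη : (Tη : Matrix (Fin 2) (Fin 2) K) = Matrix.diagonal ![η, 1]) :
    Subgroup.normalizer
        (Subgroup.closure {(QuotientGroup.mk S : PGL2 K), QuotientGroup.mk Tζ})
      = Subgroup.closure {(QuotientGroup.mk S : PGL2 K), QuotientGroup.mk Tη} ∧
    Nonempty
      ((Subgroup.closure {(QuotientGroup.mk S : PGL2 K), QuotientGroup.mk Tη})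
        ≃* DihedralGroup (2 * r)) :=
  normalizer_of_dihedral_general K r hr ζ η hη hηζ S Tζ Tη hS hTζ hTη
end
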